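/- arXiv:math/9201305 — 5 statements merged into one kernel-verified Lean document; each statement's English description precedes it below -/
import Mathlib

section
/- There is a bijection between n×n alternating sign matrices and complete monotone triangles of size n, under which the number of +1 entries of the matrix equals the number of entries of the triangle that do not occur in the preceding row; explicitly, row i of the triangle consists of those columns j such that the sum of the first i entries of column j of the matrix equals 1. -/
/-- An alternating sign matrix: entries in `{-1,0,1}`, every row and column sums
to `1`, and the nonzero entries in each row and in each column alternate in
sign. -/
def IsASM {n : ℕ} (A : Matrix (Fin n) (Fin n) ℤ) : Prop :=
  (∀ i j, A i j = -1 ∨ A i j = 0 ∨ A i j = 1) ∧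
  (∀ i, ∑ j, A i j = 1) ∧
  (∀ j, ∑ i, A i j = 1) ∧
  (∀ i j₁ j₂, j₁ < j₂ → A i j₁ ≠ 0 → A i j₂ ≠ 0 →
    (∀ k, j₁ < k → k < j₂ → A i k = 0) → A i j₂ = -A i j₁) ∧
  (∀ j i₁ i₂, i₁ < i₂ → A i₁ j ≠ 0 → A i₂ j ≠ 0 →
    (∀ k, i₁ < k → k < i₂ → A k j = 0) → A i₂ j = -A i₁ j)

/-- The number of `+1` entries of a matrix. -/
def Nplus {n : ℕ} (A : Matrix (Fin n) (Fin n) ℤ) : ℕ :=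
  (Finset.univ.filter (fun p : Fin n × Fin n => A p.1 p.2 = 1)).card

/-- The number of `-1` entries of a matrix. -/
def Nminus {n : ℕ} (A : Matrix (Fin n) (Fin n) ℤ) : ℕ :=
  (Finset.univ.filter (fun p : Fin n × Fin n => A p.1 p.2 = -1)).card
/-- A triangular array with rows of lengths `1, 2, …, n` of natural numbers
(row `i`, `0`-indexed, has `i+1` entries). -/
abbrev Triangle (n : ℕ) := (i : Fin n) → Fin (i.1 + 1) → ℕ

/-- A monotone triangle: each row is strictly increasing from left to right, and
the entries weakly increase along both diagonal directions, i.e. each entry of a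
row lies weakly between its below-left and below-right neighbours in the next
row. -/
def IsMonotoneTriangle {n : ℕ} (t : Triangle n) : Prop :=
  (∀ i : Fin n, StrictMono (t i)) ∧
  (∀ (i i' : Fin n) (h : (i : ℕ) + 1 = (i' : ℕ)) (j : Fin (i.1 + 1)),
    t i' ⟨j.1, by omega⟩ ≤ t i j ∧ t i j ≤ t i' ⟨j.1 + 1, by omega⟩)

/-- A complete monotone triangle of size `n`: a monotone triangle whose bottom
row is `1, 2, …, n`. -/
def IsCompleteMT {n : ℕ} (t : Triangle n) : Prop :=
  IsMonotoneTriangle t ∧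
  ∀ (i : Fin n) (hi : (i : ℕ) = n - 1) (j : Fin n), t i ⟨j.1, by omega⟩ = (j : ℕ) + 1

/-- The entry of `t` in row `i` at position `k` does not occur in the preceding
row (entries of the top row are always new). -/
def IsNewEntry {n : ℕ} (t : Triangle n) (i : Fin n) (k : Fin (i.1 + 1)) : Prop :=
  ∀ (i' : Fin n), (i' : ℕ) + 1 = (i : ℕ) → ∀ k' : Fin (i'.1 + 1), t i' k' ≠ t i k

/-- The number of entries of `t` that do not occur in the preceding row. -/
noncomputable def newCount {n : ℕ} (t : Triangle n) : ℕ :=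
  Nat.card {p : (i : Fin n) × Fin (i.1 + 1) // IsNewEntry t p.1 p.2}

/-- The number of entries of `t` (necessarily above the top row) that do occur in
the preceding row. -/
noncomputable def oldCount {n : ℕ} (t : Triangle n) : ℕ :=
  Nat.card {p : (i : Fin n) × Fin (i.1 + 1) // ¬ IsNewEntry t p.1 p.2}





section Helpers
open Finset



/-- partial sum of the first `m` entries -/
def partSum {N : ℕ} (a : Fin N → ℤ) (m : ℕ) : ℤ :=
  ∑ k : Fin N, if (k : ℕ) < m then a k else 0

lemma partSum_zero {N : ℕ} (a : Fin N → ℤ) : partSum a 0 = 0 := by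
  simp [partSum]

lemma partSum_succ {N : ℕ} (a : Fin N → ℤ) (m : ℕ) :
    partSum a (m + 1) = partSum a m + (if h : m < N then a ⟨m, h⟩ else 0) := by
  unfold partSum
  by_cases h : m < N
  · rw [dif_pos h]
    have key : ∀ k : Fin N, (if (k:ℕ) < m + 1 then a k else 0)
        = (if (k:ℕ) < m then a k else 0) + (if k = ⟨m, h⟩ then a k else 0) := by
      intro k
      rcases lt_trichotomy (k:ℕ) m with hk | hk | hk
      · rw [if_pos (by omega), if_pos hk, if_neg (by
          intro he; subst he; simp at hk), add_zero]
      · rw [if_pos (by omega), if_neg (by omega), if_pos (by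
          apply Fin.ext; simpa using hk), zero_add]
      · rw [if_neg (by omega), if_neg (by omega), if_neg (by
          intro he; subst he; simp at hk), add_zero]
    rw [Finset.sum_congr rfl (fun k _ => key k), Finset.sum_add_distrib]
    congr 1
    rw [Finset.sum_ite_eq' Finset.univ (⟨m, h⟩ : Fin N) a]
    simp
  · rw [dif_neg h, add_zero]
    apply Finset.sum_congr rfl
    intro k _
    have hk := k.isLt
    have : ((k:ℕ) < m + 1) ↔ ((k:ℕ) < m) := by omega
    rw [if_congr this rfl rfl]

lemma partSum_of_ge {N : ℕ} (a : Fin N → ℤ) {m : ℕ} (h : N ≤ m) :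
    partSum a m = ∑ k, a k := by
  unfold partSum
  apply Finset.sum_congr rfl
  intro k _
  rw [if_pos (lt_of_lt_of_le k.isLt h)]

lemma partSum_eq_zero {N : ℕ} {a : Fin N → ℤ} {m : ℕ}
    (h : ∀ k : Fin N, (k : ℕ) < m → a k = 0) : partSum a m = 0 := by
  apply Finset.sum_eq_zero
  intro k _
  by_cases hk : (k : ℕ) < m
  · rw [if_pos hk, h k hk]
  · rw [if_neg hk]

/-- Forward: an alternating ±1 sequence with sum 1 has all partial sums in {0,1}. -/
lemma alt_partSum {N : ℕ} {a : Fin N → ℤ}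
    (hval : ∀ k, a k = -1 ∨ a k = 0 ∨ a k = 1)
    (halt : ∀ k₁ k₂ : Fin N, k₁ < k₂ → a k₁ ≠ 0 → a k₂ ≠ 0 →
      (∀ k, k₁ < k → k < k₂ → a k = 0) → a k₂ = -a k₁)
    (hsum : ∑ k, a k = 1) :
    ∀ m, partSum a m = 0 ∨ partSum a m = 1 := by
  have J : ∀ m : ℕ, (∀ k : Fin N, (k : ℕ) < m → a k = 0) ∨
      (∃ k₀ k : Fin N, (k₀ : ℕ) ≤ (k : ℕ) ∧ (k : ℕ) < m ∧ a k₀ ≠ 0 ∧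
        (∀ k' : Fin N, (k' : ℕ) < (k₀ : ℕ) → a k' = 0) ∧ a k ≠ 0 ∧
        (∀ k' : Fin N, (k : ℕ) < (k' : ℕ) → (k' : ℕ) < m → a k' = 0) ∧
        ((a k = a k₀ ∧ partSum a m = a k₀) ∨ (a k = -a k₀ ∧ partSum a m = 0))) := by
    intro m
    induction m with
    | zero => left; intro k hk; omega
    | succ m ih =>
      by_cases hm : m < N
      · set b := a ⟨m, hm⟩ with hbdef
        by_cases hb : b = 0
        · have hps : partSum a (m + 1) = partSum a m := by
            rw [partSum_succ, dif_pos hm, ← hbdef, hb, add_zero]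
          rcases ih with h0 | ⟨k₀, k, h1, h2, h3, h4, h5, h6, h7⟩
          · left
            intro k hk
            rcases Nat.lt_succ_iff_lt_or_eq.mp hk with hk | hk
            · exact h0 k hk
            · have : k = ⟨m, hm⟩ := Fin.ext hk
              rw [this, ← hbdef]; exact hb
          · right
            refine ⟨k₀, k, h1, by omega, h3, h4, h5, ?_, ?_⟩
            · intro k' hk1 hk2
              rcases Nat.lt_succ_iff_lt_or_eq.mp hk2 with hk2 | hk2
              · exact h6 k' hk1 hk2
              · have : k' = ⟨m, hm⟩ := Fin.ext hk2
                rw [this, ← hbdef]; exact hb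
            · rw [hps]; exact h7
        · -- new nonzero entry at position m
          have hps : partSum a (m + 1) = partSum a m + b := by
            rw [partSum_succ, dif_pos hm]
          rcases ih with h0 | ⟨k₀, k, h1, h2, h3, h4, h5, h6, h7⟩
          · right
            refine ⟨⟨m, hm⟩, ⟨m, hm⟩, le_refl _, by simp, hb, ?_, hb, ?_, ?_⟩
            · intro k' hk'; exact h0 k' hk'
            · intro k' hk1 hk2; simp at hk1 hk2; omega
            · left
              constructor
              · rfl
              · rw [hps, partSum_eq_zero h0, zero_add]
          · have hlt : k < (⟨m, hm⟩ : Fin N) := h2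
            have halt' : b = -a k := by
              apply halt k ⟨m, hm⟩ hlt h5 hb
              intro k' hk1 hk2
              exact h6 k' hk1 hk2
            right
            refine ⟨k₀, ⟨m, hm⟩, by omega, by simp, h3, h4, hb, ?_, ?_⟩
            · intro k' hk1 hk2; simp at hk1; omega
            · rcases h7 with ⟨hak, hpsm⟩ | ⟨hak, hpsm⟩
              · right
                constructor
                · rw [← hbdef, halt', hak]
                · rw [hps, hpsm, halt', hak]; ring
              · left
                constructor
                · rw [← hbdef, halt', hak, neg_neg]
                · rw [hps, hpsm, halt', hak, neg_neg, zero_add]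
      · -- m ≥ N : nothing changes
        have hps : partSum a (m + 1) = partSum a m := by
          rw [partSum_succ, dif_neg hm, add_zero]
        have hlt : ∀ k : Fin N, (k : ℕ) < m + 1 ↔ (k : ℕ) < m := by
          intro k; have := k.isLt; omega
        rcases ih with h0 | ⟨k₀, k, h1, h2, h3, h4, h5, h6, h7⟩
        · left; intro k hk; exact h0 k ((hlt k).mp hk)
        · right
          exact ⟨k₀, k, h1, by omega, h3, h4, h5,
            fun k' hk1 hk2 => h6 k' hk1 ((hlt k').mp hk2), by rw [hps]; exact h7⟩
  -- from J at N and the total sum, the "first nonzero" is +1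
  have hN : partSum a N = 1 := by rw [partSum_of_ge a (le_refl N)]; exact hsum
  rcases J N with h0 | ⟨k₀N, kN, _, _, h3N, h4N, _, _, h7N⟩
  · exfalso
    rw [partSum_eq_zero (fun k _ => h0 k k.isLt)] at hN
    exact absurd hN (by norm_num)
  · have hk₀N : a k₀N = 1 := by
      rcases h7N with ⟨_, h⟩ | ⟨_, h⟩
      · rw [hN] at h; omega
      · rw [hN] at h; omega
    intro m
    rcases J m with h0 | ⟨k₀, k, h1, h2, h3, h4, h5, h6, h7⟩
    · left; exact partSum_eq_zero h0
    · have hk₀ : k₀ = k₀N := by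
        apply Fin.ext
        by_contra hne
        rcases Nat.lt_or_ge (k₀ : ℕ) (k₀N : ℕ) with h | h
        · exact h3 (h4N k₀ h)
        · have : (k₀N : ℕ) < (k₀ : ℕ) := by omega
          exact h3N (h4 k₀N this)
      rcases h7 with ⟨_, h⟩ | ⟨_, h⟩
      · right; rw [h, hk₀, hk₀N]
      · left; exact h

/-- Backward: if all partial sums are in {0,1} then nonzero entries alternate. -/
lemma partSum_alt {N : ℕ} {a : Fin N → ℤ}
    (hps : ∀ m, partSum a m = 0 ∨ partSum a m = 1) :
    ∀ k₁ k₂ : Fin N, k₁ < k₂ → a k₁ ≠ 0 → a k₂ ≠ 0 →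
      (∀ k, k₁ < k → k < k₂ → a k = 0) → a k₂ = -a k₁ := by
  intro k₁ k₂ hlt h1 h2 hz
  have e1 : a k₁ = partSum a ((k₁ : ℕ) + 1) - partSum a (k₁ : ℕ) := by
    rw [partSum_succ, dif_pos k₁.isLt]
    simp
  have e2 : a k₂ = partSum a ((k₂ : ℕ) + 1) - partSum a (k₂ : ℕ) := by
    rw [partSum_succ, dif_pos k₂.isLt]
    simp
  have const : ∀ d : ℕ, (k₁ : ℕ) + 1 + d ≤ (k₂ : ℕ) →
      partSum a ((k₁ : ℕ) + 1 + d) = partSum a ((k₁ : ℕ) + 1) := by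
    intro d
    induction d with
    | zero => intro _; rfl
    | succ d ih =>
      intro hd
      have hmlt : (k₁ : ℕ) + 1 + d < N := by have := k₂.isLt; omega
      have : a ⟨(k₁ : ℕ) + 1 + d, hmlt⟩ = 0 := by
        apply hz
        · show (k₁ : ℕ) < (k₁ : ℕ) + 1 + d; omega
        · show ((k₁ : ℕ) + 1 + d) < (k₂ : ℕ); omega
      have hstep := partSum_succ a ((k₁ : ℕ) + 1 + d)
      rw [dif_pos hmlt, this, add_zero] at hstep
      rw [show (k₁ : ℕ) + 1 + (d + 1) = (k₁ : ℕ) + 1 + d + 1 by omega, hstep]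
      exact ih (by omega)
  have hconst : partSum a ((k₂ : ℕ)) = partSum a ((k₁ : ℕ) + 1) := by
    have hle : (k₁ : ℕ) + 1 ≤ (k₂ : ℕ) := hlt
    have := const ((k₂ : ℕ) - ((k₁ : ℕ) + 1)) (by omega)
    rw [show (k₁ : ℕ) + 1 + ((k₂ : ℕ) - ((k₁ : ℕ) + 1)) = (k₂ : ℕ) by omega] at this
    exact this
  rcases hps (k₁ : ℕ) with h | h <;> rcases hps ((k₁ : ℕ) + 1) with h' | h' <;>
    rcases hps ((k₂ : ℕ) + 1) with h'' | h'' <;> omega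


/-- number of elements of `s` that are `≤ m` -/
def cntOf (s : Finset ℕ) (m : ℕ) : ℕ := (s.filter (· ≤ m)).card

/-- the `k`-th smallest element of `s` (0 if out of range) -/
def enumOf (s : Finset ℕ) (k : ℕ) : ℕ := (s.sort (· ≤ ·)).getD k 0

lemma enumOf_mem {s : Finset ℕ} {k : ℕ} (hk : k < s.card) : enumOf s k ∈ s := by
  have hlen : (s.sort (· ≤ ·)).length = s.card := Finset.length_sort _
  rw [enumOf, List.getD_eq_getElem _ _ (by omega)]
  rw [← Finset.mem_sort (α := ℕ) (· ≤ ·)]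
  exact List.getElem_mem _

lemma enumOf_strictMono {s : Finset ℕ} {k₁ k₂ : ℕ} (h : k₁ < k₂) (hk : k₂ < s.card) :
    enumOf s k₁ < enumOf s k₂ := by
  have hlen : (s.sort (· ≤ ·)).length = s.card := Finset.length_sort _
  have hs : (s.sort (· ≤ ·)).Pairwise (· < ·) := (Finset.sortedLT_sort s).pairwise
  rw [enumOf, enumOf, List.getD_eq_getElem _ _ (by omega), List.getD_eq_getElem _ _ (by omega)]
  exact List.Pairwise.rel_get_of_lt hs (by exact h)

lemma enumOf_mono {s : Finset ℕ} {k₁ k₂ : ℕ} (h : k₁ ≤ k₂) (hk : k₂ < s.card) :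
    enumOf s k₁ ≤ enumOf s k₂ := by
  rcases Nat.lt_or_ge k₁ k₂ with h' | h'
  · exact le_of_lt (enumOf_strictMono h' hk)
  · have : k₁ = k₂ := by omega
    rw [this]

lemma exists_enumOf {s : Finset ℕ} {m : ℕ} (hm : m ∈ s) :
    ∃ k, k < s.card ∧ enumOf s k = m := by
  have hlen : (s.sort (· ≤ ·)).length = s.card := Finset.length_sort _
  have : m ∈ s.sort (· ≤ ·) := (Finset.mem_sort _).mpr hm
  obtain ⟨i, hi, he⟩ := List.mem_iff_getElem.mp this
  exact ⟨i, by omega, by rw [enumOf, List.getD_eq_getElem _ _ hi]; exact he⟩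

lemma enumOf_le_iff {s : Finset ℕ} {k m : ℕ} (hk : k < s.card) :
    enumOf s k ≤ m ↔ k + 1 ≤ cntOf s m := by
  constructor
  · intro h
    have hsub : (Finset.range (k + 1)).card ≤ (s.filter (· ≤ m)).card := by
      apply Finset.card_le_card_of_injOn (enumOf s)
      · intro j hj
        rw [Finset.mem_coe, Finset.mem_range] at hj
        rw [Finset.mem_coe, Finset.mem_filter]
        exact ⟨enumOf_mem (by omega), le_trans (enumOf_mono (by omega) hk) h⟩
      · intro j1 h1 j2 h2 he
        rw [Finset.coe_range, Set.mem_Iio] at h1 h2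
        by_contra hne
        rcases Nat.lt_or_ge j1 j2 with h' | h'
        · exact absurd he (ne_of_lt (enumOf_strictMono h' (by omega)))
        · exact absurd he.symm (ne_of_lt (enumOf_strictMono (by omega) (by omega)))
    simpa [cntOf] using hsub
  · intro h
    by_contra hle
    push_neg at hle
    have hsub : s.filter (· ≤ m) ⊆ (Finset.range k).image (enumOf s) := by
      intro x hx
      rw [Finset.mem_filter] at hx
      obtain ⟨j, hj, he⟩ := exists_enumOf hx.1
      rw [Finset.mem_image]
      refine ⟨j, Finset.mem_range.mpr ?_, he⟩
      by_contra hjk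
      push_neg at hjk
      have : enumOf s k ≤ enumOf s j := enumOf_mono hjk hj
      omega
    have := Finset.card_le_card hsub
    have := Finset.card_image_le (s := Finset.range k) (f := enumOf s)
    rw [cntOf] at h
    simp at this
    omega

/-- number of `k` with `u k ≤ m` -/
def cntF {p : ℕ} (u : Fin p → ℕ) (m : ℕ) : ℕ :=
  (Finset.univ.filter (fun k => u k ≤ m)).card

lemma cntF_le_iff {p : ℕ} {u : Fin p → ℕ} (hu : StrictMono u) (k : Fin p) (m : ℕ) :
    u k ≤ m ↔ (k : ℕ) + 1 ≤ cntF u m := by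
  constructor
  · intro h
    have hsub : Finset.Iic k ⊆ Finset.univ.filter (fun j => u j ≤ m) := by
      intro j hj
      rw [Finset.mem_Iic] at hj
      rw [Finset.mem_filter]
      exact ⟨Finset.mem_univ _, le_trans (hu.monotone hj) h⟩
    have := Finset.card_le_card hsub
    rwa [Fin.card_Iic] at this
  · intro h
    by_contra hle
    push_neg at hle
    have hsub : Finset.univ.filter (fun j => u j ≤ m) ⊆ Finset.Iio k := by
      intro j hj
      rw [Finset.mem_filter] at hj
      rw [Finset.mem_Iio]
      by_contra hjk
      push_neg at hjk
      have := hu.monotone hjk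
      omega
    have := Finset.card_le_card hsub
    rw [Fin.card_Iio] at this
    rw [cntF] at h
    omega

/-- the set of values of a strict mono `u` has `enumOf` equal to `u`. -/
lemma enumOf_eq_of_strictMono {p : ℕ} {u : Fin p → ℕ} (hu : StrictMono u)
    {s : Finset ℕ} (hs : ∀ m, m ∈ s ↔ ∃ k, u k = m) :
    (∀ m, cntOf s m = cntF u m) ∧ s.card = p ∧ ∀ k : Fin p, enumOf s (k : ℕ) = u k := by
  have hset : s = Finset.univ.image u := by
    ext m
    rw [Finset.mem_image, hs]
    simp
  have hcard : s.card = p := by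
    rw [hset, Finset.card_image_of_injective _ hu.injective]
    simp
  have hcnt : ∀ m, cntOf s m = cntF u m := by
    intro m
    rw [cntOf, hset, Finset.filter_image, Finset.card_image_of_injective _ hu.injective]
    rfl
  refine ⟨hcnt, hcard, ?_⟩
  intro k
  have h1 : ∀ m, enumOf s (k : ℕ) ≤ m ↔ u k ≤ m := by
    intro m
    rw [enumOf_le_iff (by rw [hcard]; exact k.isLt), hcnt, cntF_le_iff hu]
  have h2 := (h1 (u k)).mpr (le_refl _)
  have h3 := (h1 (enumOf s (k : ℕ))).mp (le_refl _)
  omega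

lemma cntOf_le_card (s : Finset ℕ) (m : ℕ) : cntOf s m ≤ s.card :=
  Finset.card_filter_le _ _

lemma cntF_le_card {p : ℕ} (u : Fin p → ℕ) (m : ℕ) : cntF u m ≤ p := by
  have := Finset.card_filter_le (Finset.univ : Finset (Fin p)) (fun k => u k ≤ m)
  simpa [cntF] using this

/-- counting inequalities imply interlacing of sorted enumerations -/
lemma interlace_of_cnt {s s' : Finset ℕ} (hc : s'.card = s.card + 1)
    (h : ∀ m, cntOf s m ≤ cntOf s' m ∧ cntOf s' m ≤ cntOf s m + 1) :
    ∀ k, k < s.card → enumOf s' k ≤ enumOf s k ∧ enumOf s k ≤ enumOf s' (k + 1) := by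
  intro k hk
  constructor
  · rw [enumOf_le_iff (by omega)]
    have h1 := (enumOf_le_iff hk).mp (le_refl (enumOf s k))
    have h2 := (h (enumOf s k)).1
    omega
  · have h1 := (enumOf_le_iff (show k + 1 < s'.card by omega)).mp
      (le_refl (enumOf s' (k + 1)))
    have h2 := (h (enumOf s' (k + 1))).2
    rw [enumOf_le_iff hk]
    omega

/-- interlacing of strict mono sequences implies counting inequalities -/
lemma cntF_of_interlace {p : ℕ} {u : Fin p → ℕ} {w : Fin (p + 1) → ℕ}
    (hu : StrictMono u) (hw : StrictMono w)
    (h : ∀ k : Fin p, w ⟨k, by omega⟩ ≤ u k ∧ u k ≤ w ⟨(k : ℕ) + 1, by omega⟩) :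
    ∀ m, cntF u m ≤ cntF w m ∧ cntF w m ≤ cntF u m + 1 := by
  intro m
  have hcu : cntF u m ≤ p := cntF_le_card u m
  have hcw : cntF w m ≤ p + 1 := cntF_le_card w m
  constructor
  · by_cases h0 : cntF u m = 0
    · omega
    · have hk : cntF u m - 1 < p := by omega
      have hu1 : u ⟨cntF u m - 1, hk⟩ ≤ m := by
        rw [cntF_le_iff hu]
        simp
        omega
      have hw1 : w ⟨cntF u m - 1, by omega⟩ ≤ m :=
        le_trans (h ⟨cntF u m - 1, hk⟩).1 hu1
      have := (cntF_le_iff hw _ m).mp hw1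
      simp at this
      omega
  · by_cases h0 : cntF w m ≤ 1
    · omega
    · have hj : cntF w m - 1 < p + 1 := by omega
      have hw1 : w ⟨cntF w m - 1, hj⟩ ≤ m := by
        rw [cntF_le_iff hw]
        simp
        omega
      have hk2 : cntF w m - 2 < p := by omega
      have hu1 : u ⟨cntF w m - 2, hk2⟩ ≤ m := by
        refine le_trans ?_ hw1
        have := (h ⟨cntF w m - 2, hk2⟩).2
        convert this using 2
        · rfl
        · exact Fin.ext (by show cntF w m - 1 = cntF w m - 2 + 1; omega)
      have := (cntF_le_iff hu _ m).mp hu1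
      simp at this
      omega

end Helpers

section ASMside
open Finset
variable {n : ℕ}

/-- partial column sums of a matrix -/
def colPS (A : Matrix (Fin n) (Fin n) ℤ) (i j : Fin n) : ℤ :=
  partSum (fun i' => A i' j) ((i : ℕ) + 1)

lemma colPS_eq_sum (A : Matrix (Fin n) (Fin n) ℤ) (i j : Fin n) :
    colPS A i j = ∑ i' : Fin n, if (i' : ℕ) ≤ (i : ℕ) then A i' j else 0 := by
  unfold colPS partSum
  apply Finset.sum_congr rfl
  intro k _
  have : ((k : ℕ) < (i : ℕ) + 1) ↔ ((k : ℕ) ≤ (i : ℕ)) := by omega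
  rw [if_congr this rfl rfl]

/-- the set of columns contributing to row `i` of the triangle -/
def rowSet (A : Matrix (Fin n) (Fin n) ℤ) (i : Fin n) : Finset (Fin n) :=
  Finset.univ.filter (fun j => colPS A i j = 1)

/-- 1-based values of row `i` of the triangle -/
def valsA (A : Matrix (Fin n) (Fin n) ℤ) (i : Fin n) : Finset ℕ :=
  (rowSet A i).image (fun j : Fin n => (j : ℕ) + 1)

lemma succ_inj' : Function.Injective (fun j : Fin n => (j : ℕ) + 1) := by
  intro a b h
  simp at h
  exact Fin.ext h

/-- the triangle associated to a matrix -/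
def triOf (A : Matrix (Fin n) (Fin n) ℤ) : Triangle n :=
  fun i k => enumOf (valsA A i) (k : ℕ)

lemma mem_valsA {A : Matrix (Fin n) (Fin n) ℤ} {i : Fin n} {m : ℕ} :
    m ∈ valsA A i ↔ ∃ j : Fin n, (j : ℕ) + 1 = m ∧ colPS A i j = 1 := by
  simp [valsA, rowSet]
  constructor
  · rintro ⟨j, hj, he⟩; exact ⟨j, he, hj⟩
  · rintro ⟨j, he, hj⟩; exact ⟨j, hj, he⟩

variable {A : Matrix (Fin n) (Fin n) ℤ}

lemma colPS_mem (hA : IsASM A) (i j : Fin n) : colPS A i j = 0 ∨ colPS A i j = 1 := by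
  obtain ⟨hval, hrow, hcol, hrowalt, hcolalt⟩ := hA
  exact alt_partSum (fun k => hval k j) (hcolalt j) (hcol j) _

lemma colPS_succ (i i' j : Fin n) (h : (i : ℕ) + 1 = (i' : ℕ)) :
    colPS A i' j = colPS A i j + A i' j := by
  have he : i' = ⟨(i : ℕ) + 1, by omega⟩ := Fin.ext h.symm
  rw [he]
  unfold colPS
  simp only []
  rw [partSum_succ, dif_pos (by omega : (i : ℕ) + 1 < n)]

lemma colPS_zero_row (j : Fin n) (i : Fin n) (h : (i : ℕ) = 0) :
    colPS A i j = A i j := by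
  have he : i = ⟨0, by omega⟩ := Fin.ext h
  rw [he]
  unfold colPS
  simp only []
  rw [partSum_succ, partSum_zero, zero_add, dif_pos (by omega : 0 < n)]

lemma card_valsA (hA : IsASM A) (i : Fin n) : (valsA A i).card = (i : ℕ) + 1 := by
  have hA' := hA
  obtain ⟨hval, hrow, hcol, hrowalt, hcolalt⟩ := hA
  have hsum : ∑ j : Fin n, colPS A i j = ((i : ℕ) + 1 : ℤ) := by
    have : ∀ j : Fin n, colPS A i j = ∑ i' : Fin n, if (i' : ℕ) ≤ (i : ℕ) then A i' j else 0 :=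
      fun j => colPS_eq_sum A i j
    rw [Finset.sum_congr rfl (fun j _ => this j), Finset.sum_comm]
    have : ∀ i' : Fin n, (∑ j : Fin n, if (i' : ℕ) ≤ (i : ℕ) then A i' j else 0)
        = if (i' : ℕ) ≤ (i : ℕ) then 1 else 0 := by
      intro i'
      by_cases h : (i' : ℕ) ≤ (i : ℕ)
      · simp only [if_pos h]; exact hrow i'
      · simp only [if_neg h, Finset.sum_const_zero]
    rw [Finset.sum_congr rfl (fun i' _ => this i'), Finset.sum_boole]
    have he : Finset.univ.filter (fun i' : Fin n => (i' : ℕ) ≤ (i : ℕ)) = Finset.Iic i := by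
      ext i'; simp only [Finset.mem_filter, Finset.mem_univ, true_and, Finset.mem_Iic, Fin.le_def]
    rw [he, Fin.card_Iic]
    push_cast
    ring
  have hsum2 : ∑ j : Fin n, colPS A i j = ((rowSet A i).card : ℤ) := by
    rw [← Finset.sum_filter_add_sum_filter_not Finset.univ (fun j => colPS A i j = 1)]
    have h1 : ∑ j ∈ Finset.univ.filter (fun j => colPS A i j = 1), colPS A i j
        = ((rowSet A i).card : ℤ) := by
      rw [Finset.sum_congr rfl (fun j hj => (Finset.mem_filter.mp hj).2)]
      simp [rowSet]
    have h2 : ∑ j ∈ Finset.univ.filter (fun j => ¬ colPS A i j = 1), colPS A i j = 0 := by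
      apply Finset.sum_eq_zero
      intro j hj
      rcases colPS_mem hA' i j with h | h
      · exact h
      · exact absurd h (Finset.mem_filter.mp hj).2
    rw [h1, h2, add_zero]
  have : ((rowSet A i).card : ℤ) = ((i : ℕ) + 1 : ℤ) := by rw [← hsum2, hsum]
  have hcard : (rowSet A i).card = (i : ℕ) + 1 := by exact_mod_cast this
  rw [valsA, Finset.card_image_of_injective _ succ_inj', hcard]

lemma triOf_strictMono (hA : IsASM A) (i : Fin n) : StrictMono (triOf A i) := by
  intro k1 k2 h
  exact enumOf_strictMono h (by rw [card_valsA hA]; exact k2.isLt)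

lemma triOf_exists_iff (hA : IsASM A) (i : Fin n) (m : ℕ) :
    (∃ k : Fin ((i : ℕ) + 1), triOf A i k = m) ↔ m ∈ valsA A i := by
  constructor
  · rintro ⟨k, hk⟩
    rw [← hk]
    exact enumOf_mem (by rw [card_valsA hA]; exact k.isLt)
  · intro hm
    obtain ⟨k, hk, he⟩ := exists_enumOf hm
    rw [card_valsA hA] at hk
    exact ⟨⟨k, hk⟩, he⟩

lemma cntOf_valsA (hA : IsASM A) (i : Fin n) (m : ℕ) :
    ((cntOf (valsA A i) m : ℤ)) = ∑ j : Fin n, if (j : ℕ) + 1 ≤ m then colPS A i j else 0 := by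
  have h1 : ∀ j : Fin n, (if (j : ℕ) + 1 ≤ m then colPS A i j else 0)
      = if ((j : ℕ) + 1 ≤ m ∧ colPS A i j = 1) then 1 else 0 := by
    intro j
    by_cases hj : (j : ℕ) + 1 ≤ m
    · rcases colPS_mem hA i j with h | h <;> rw [if_pos hj, h] <;> simp [hj]
    · rw [if_neg hj, if_neg (fun hc => hj hc.1)]
  rw [Finset.sum_congr rfl (fun j _ => h1 j), Finset.sum_boole]
  congr 1
  rw [cntOf, valsA, Finset.filter_image, Finset.card_image_of_injective _ succ_inj']
  congr 1
  rw [rowSet, Finset.filter_filter]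
  apply Finset.filter_congr
  intro j _
  constructor
  · rintro ⟨h1', h2'⟩; exact ⟨h2', h1'⟩
  · rintro ⟨h1', h2'⟩; exact ⟨h2', h1'⟩

lemma cntOf_valsA_succ (hA : IsASM A) (i i' : Fin n) (h : (i : ℕ) + 1 = (i' : ℕ)) (m : ℕ) :
    cntOf (valsA A i) m ≤ cntOf (valsA A i') m ∧
    cntOf (valsA A i') m ≤ cntOf (valsA A i) m + 1 := by
  have hA' := hA
  obtain ⟨hval, hrow, hcol, hrowalt, hcolalt⟩ := hA
  have hps : partSum (fun j => A i' j) m = 0 ∨ partSum (fun j => A i' j) m = 1 :=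
    alt_partSum (fun k => hval i' k) (hrowalt i') (hrow i') m
  have hdiff : (cntOf (valsA A i') m : ℤ) - (cntOf (valsA A i) m : ℤ)
      = partSum (fun j => A i' j) m := by
    rw [cntOf_valsA hA', cntOf_valsA hA', ← Finset.sum_sub_distrib]
    unfold partSum
    apply Finset.sum_congr rfl
    intro j _
    show (if (j : ℕ) + 1 ≤ m then colPS A i' j else 0)
        - (if (j : ℕ) + 1 ≤ m then colPS A i j else 0)
        = if (j : ℕ) < m then A i' j else 0
    by_cases hj : (j : ℕ) + 1 ≤ m
    · rw [if_pos hj, if_pos hj, if_pos (by omega : (j : ℕ) < m),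
        colPS_succ i i' j h]
      ring
    · rw [if_neg hj, if_neg hj, if_neg (by omega : ¬ (j : ℕ) < m), sub_zero]
  constructor <;> [rcases hps with h' | h'; rcases hps with h' | h'] <;>
    rw [h'] at hdiff <;> omega

lemma triOf_interlace (hA : IsASM A) (i i' : Fin n) (h : (i : ℕ) + 1 = (i' : ℕ)) (j : Fin ((i : ℕ) + 1)) :
    triOf A i' ⟨j.1, by omega⟩ ≤ triOf A i j ∧
    triOf A i j ≤ triOf A i' ⟨j.1 + 1, by omega⟩ := by
  have hc : (valsA A i').card = (valsA A i).card + 1 := by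
    rw [card_valsA hA, card_valsA hA]; omega
  have := interlace_of_cnt hc (fun m => cntOf_valsA_succ hA i i' h m) j.1
    (by rw [card_valsA hA]; exact j.isLt)
  exact this

lemma triOf_bottom (hA : IsASM A) (i : Fin n) (hi : (i : ℕ) = n - 1) (j : Fin n) :
    triOf A i ⟨j.1, by omega⟩ = (j : ℕ) + 1 := by
  obtain ⟨hval, hrow, hcol, hrowalt, hcolalt⟩ := hA
  have hall : ∀ j' : Fin n, colPS A i j' = 1 := by
    intro j'
    unfold colPS
    rw [hi, show n - 1 + 1 = n by omega, partSum_of_ge _ (le_refl n)]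
    exact hcol j'
  have hmem : ∀ m, m ∈ valsA A i ↔ ∃ k : Fin n, (fun k : Fin n => (k : ℕ) + 1) k = m := by
    intro m
    rw [mem_valsA]
    constructor
    · rintro ⟨j', hj', _⟩; exact ⟨j', hj'⟩
    · rintro ⟨j', hj'⟩; exact ⟨j', hj', hall j'⟩
  have hsm : StrictMono (fun k : Fin n => (k : ℕ) + 1) := by
    intro a b hab; simp; exact hab
  have := (enumOf_eq_of_strictMono hsm hmem).2.2 j
  exact this

end ASMside


section TriSide
open Finset
variable {n : ℕ}

/-- indicator that `j+1` occurs in row `i` of the triangle -/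
noncomputable def chi (t : Triangle n) (i : Fin n) (j : Fin n) : ℤ :=
  if ∃ k, t i k = (j : ℕ) + 1 then 1 else 0

/-- the matrix associated to a triangle -/
noncomputable def matOf (t : Triangle n) : Matrix (Fin n) (Fin n) ℤ :=
  fun i j => chi t i j - (if h : 0 < (i : ℕ) then chi t ⟨(i : ℕ) - 1, by omega⟩ j else 0)

lemma chi_mem (t : Triangle n) (i j : Fin n) : chi t i j = 0 ∨ chi t i j = 1 := by
  unfold chi; split_ifs <;> simp

variable {t : Triangle n}

/-- entries of a complete monotone triangle lie in `[1, n]` -/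
lemma entry_bounds (ht : IsCompleteMT t) :
    ∀ (i : Fin n) (k : Fin ((i : ℕ) + 1)), 1 ≤ t i k ∧ t i k ≤ n := by
  obtain ⟨⟨hsm, hint⟩, hbot⟩ := ht
  have claim : ∀ d : ℕ, ∀ i : Fin n, (i : ℕ) + d = n - 1 →
      ∀ k : Fin ((i : ℕ) + 1), 1 ≤ t i k ∧ t i k ≤ n := by
    intro d
    induction d with
    | zero =>
      intro i hi k
      have hkn : (k : ℕ) < n := by omega
      have := hbot i (by omega) ⟨(k : ℕ), hkn⟩
      have hk : (⟨(⟨(k : ℕ), hkn⟩ : Fin n).1, by omega⟩ : Fin ((i : ℕ) + 1)) = k :=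
        Fin.ext rfl
      rw [hk] at this
      rw [this]
      simp
      omega
    | succ d ih =>
      intro i hi k
      have hin : (i : ℕ) + 1 < n := by omega
      have hih := ih ⟨(i : ℕ) + 1, hin⟩ (by show (i : ℕ) + 1 + d = n - 1; omega)
      have h1 := hint i ⟨(i : ℕ) + 1, hin⟩ rfl k
      have hk1 : (k : ℕ) < ((⟨(i : ℕ) + 1, hin⟩ : Fin n) : ℕ) + 1 := by
        show (k : ℕ) < (i : ℕ) + 1 + 1; omega
      have hk2 : (k : ℕ) + 1 < ((⟨(i : ℕ) + 1, hin⟩ : Fin n) : ℕ) + 1 := by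
        show (k : ℕ) + 1 < (i : ℕ) + 1 + 1; omega
      have h2 := hih ⟨(k : ℕ), hk1⟩
      have h3 := hih ⟨(k : ℕ) + 1, hk2⟩
      exact ⟨le_trans h2.1 h1.1, le_trans h1.2 h3.2⟩
  intro i k
  exact claim (n - 1 - (i : ℕ)) i (by omega) k

/-- values of row `i` of the triangle -/
def valsT (t : Triangle n) (i : Fin n) : Finset ℕ := Finset.univ.image (t i)

lemma mem_valsT {i : Fin n} {m : ℕ} : m ∈ valsT t i ↔ ∃ k, t i k = m := by
  simp [valsT]

lemma colPS_matOf (ht : IsCompleteMT t) (i j : Fin n) :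
    colPS (matOf t) i j = chi t i j := by
  have key : ∀ m : ℕ, ∀ i : Fin n, (i : ℕ) = m → colPS (matOf t) i j = chi t i j := by
    intro m
    induction m with
    | zero =>
      intro i hi
      rw [colPS_zero_row j i hi]
      unfold matOf
      rw [dif_neg (by omega)]
      ring
    | succ m ih =>
      intro i hi
      have hm : m < n := by omega
      set ip : Fin n := ⟨m, hm⟩ with hip
      have h1 : (ip : ℕ) + 1 = (i : ℕ) := by simp [hip]; omega
      rw [colPS_succ ip i j h1, ih ip rfl]
      unfold matOf
      rw [dif_pos (by omega : 0 < (i : ℕ))]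
      have he : (⟨(i : ℕ) - 1, by omega⟩ : Fin n) = ip := Fin.ext (by simp [hip]; omega)
      rw [he]
      ring
  exact key (i : ℕ) i rfl

/-- partial row sums of `chi` count the entries of row `i` that are `≤ m` -/
lemma chi_partSum (ht : IsCompleteMT t) (i : Fin n) (m : ℕ) :
    partSum (fun j => chi t i j) m = (cntF (t i) m : ℤ) := by
  have hb := entry_bounds ht i
  have hsm := ht.1.1 i
  have h1 : partSum (fun j => chi t i j) m
      = ((Finset.univ.filter (fun j : Fin n => (j : ℕ) < m ∧ ∃ k, t i k = (j : ℕ) + 1)).card : ℤ) := by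
    unfold partSum chi
    rw [← Finset.sum_boole]
    apply Finset.sum_congr rfl
    intro j _
    show (if (j : ℕ) < m then (if ∃ k, t i k = (j : ℕ) + 1 then (1:ℤ) else 0) else 0)
        = if ((j : ℕ) < m ∧ ∃ k, t i k = (j : ℕ) + 1) then 1 else 0
    by_cases hj : (j : ℕ) < m
    · by_cases he : ∃ k, t i k = (j : ℕ) + 1
      · rw [if_pos hj, if_pos he, if_pos ⟨hj, he⟩]
      · rw [if_pos hj, if_neg he, if_neg (fun hc => he hc.2)]
    · rw [if_neg hj, if_neg (fun hc => hj hc.1)]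
  rw [h1]
  have hcnt := (enumOf_eq_of_strictMono hsm (fun m' => (mem_valsT (t := t) (i := i)))).1 m
  rw [← hcnt]
  congr 1
  have himg : (valsT t i).filter (· ≤ m)
      = (Finset.univ.filter (fun j : Fin n => (j : ℕ) < m ∧ ∃ k, t i k = (j : ℕ) + 1)).image
        (fun j : Fin n => (j : ℕ) + 1) := by
    ext m'
    simp only [Finset.mem_filter, Finset.mem_image, Finset.mem_univ, true_and]
    constructor
    · rintro ⟨hmem, hle⟩
      obtain ⟨k, hk⟩ := mem_valsT.mp hmem
      have hb' := hb k
      refine ⟨⟨m' - 1, by omega⟩, ⟨by simp; omega, ?_⟩, by simp; omega⟩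
      refine ⟨k, ?_⟩
      simp
      omega
    · rintro ⟨j, ⟨hjm, hex⟩, he⟩
      exact ⟨mem_valsT.mpr (by rw [he] at hex; exact hex), by omega⟩
  rw [cntOf, himg, Finset.card_image_of_injective _ succ_inj']

lemma cntF_of_interlace' {p q : ℕ} (hq : q = p + 1) {u : Fin p → ℕ} {w : Fin q → ℕ}
    (hu : StrictMono u) (hw : StrictMono w)
    (h : ∀ k : Fin p, w ⟨k, by omega⟩ ≤ u k ∧ u k ≤ w ⟨(k : ℕ) + 1, by omega⟩) :
    ∀ m, cntF u m ≤ cntF w m ∧ cntF w m ≤ cntF u m + 1 := by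
  subst hq
  exact cntF_of_interlace hu hw h

lemma partSum_sub {N : ℕ} (f g : Fin N → ℤ) (m : ℕ) :
    partSum (fun k => f k - g k) m = partSum f m - partSum g m := by
  unfold partSum
  rw [← Finset.sum_sub_distrib]
  apply Finset.sum_congr rfl
  intro k _
  split_ifs <;> ring

lemma matOf_entries (i j : Fin n) :
    matOf t i j = -1 ∨ matOf t i j = 0 ∨ matOf t i j = 1 := by
  unfold matOf
  split_ifs with h
  · rcases chi_mem t i j with h1 | h1 <;>
      rcases chi_mem t ⟨(i : ℕ) - 1, by omega⟩ j with h2 | h2 <;>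
      rw [h1, h2] <;> norm_num
  · rcases chi_mem t i j with h1 | h1 <;> rw [h1] <;> norm_num

lemma cntF_full (ht : IsCompleteMT t) (i : Fin n) : cntF (t i) n = (i : ℕ) + 1 := by
  rw [cntF, Finset.filter_true_of_mem (fun k _ => (entry_bounds ht i k).2)]
  simp

lemma matOf_row_eq (ht : IsCompleteMT t) (i : Fin n) (m : ℕ) :
    partSum (fun j => matOf t i j) m
      = (cntF (t i) m : ℤ)
        - (if h : 0 < (i : ℕ) then (cntF (t ⟨(i : ℕ) - 1, by omega⟩) m : ℤ) else 0) := by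
  by_cases h : 0 < (i : ℕ)
  · rw [dif_pos h]
    have he : (fun j => matOf t i j)
        = fun j => chi t i j - chi t ⟨(i : ℕ) - 1, by omega⟩ j := by
      funext j
      unfold matOf
      rw [dif_pos h]
    rw [he, partSum_sub, chi_partSum ht, chi_partSum ht]
  · rw [dif_neg h]
    have he : (fun j => matOf t i j) = fun j => chi t i j - 0 := by
      funext j
      unfold matOf
      rw [dif_neg h]
    rw [he]
    have : (fun j => chi t i j - 0) = fun j => chi t i j := by funext j; ring
    rw [this, chi_partSum ht, sub_zero]

lemma matOf_row_ps (ht : IsCompleteMT t) (i : Fin n) (m : ℕ) :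
    partSum (fun j => matOf t i j) m = 0 ∨ partSum (fun j => matOf t i j) m = 1 := by
  rw [matOf_row_eq ht]
  by_cases h : 0 < (i : ℕ)
  · rw [dif_pos h]
    set ip : Fin n := ⟨(i : ℕ) - 1, by omega⟩ with hip
    have hcnt := cntF_of_interlace' (p := (ip : ℕ) + 1) (q := (i : ℕ) + 1)
      (by show (i : ℕ) + 1 = (i : ℕ) - 1 + 1 + 1; omega)
      (ht.1.1 ip) (ht.1.1 i) (fun k => ht.1.2 ip i (by show (i : ℕ) - 1 + 1 = (i : ℕ); omega) k) m
    rcases hcnt with ⟨ha, hb⟩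
    omega
  · rw [dif_neg h]
    have h0 : (i : ℕ) = 0 := by omega
    have := cntF_le_card (t i) m
    omega

lemma matOf_row_sum (ht : IsCompleteMT t) (i : Fin n) : ∑ j, matOf t i j = 1 := by
  have := matOf_row_eq ht i n
  rw [partSum_of_ge _ (le_refl n), cntF_full ht] at this
  rw [this]
  by_cases h : 0 < (i : ℕ)
  · rw [dif_pos h, cntF_full ht]
    have : ((⟨(i : ℕ) - 1, by omega⟩ : Fin n) : ℕ) = (i : ℕ) - 1 := rfl
    rw [this]
    push_cast
    omega
  · rw [dif_neg h]
    have h0 : (i : ℕ) = 0 := by omega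
    rw [h0]
    norm_num

lemma matOf_col_chi (ht : IsCompleteMT t) (i j : Fin n) (hm : (i : ℕ) + 1 ≤ n) :
    partSum (fun i' => matOf t i' j) ((i : ℕ) + 1) = chi t i j :=
  colPS_matOf ht i j

lemma matOf_col_ps (ht : IsCompleteMT t) (j : Fin n) (m : ℕ) :
    partSum (fun i' => matOf t i' j) m = 0 ∨ partSum (fun i' => matOf t i' j) m = 1 := by
  have hn : 0 < n := j.pos
  rcases Nat.eq_zero_or_pos m with h0 | h0
  · left; rw [h0, partSum_zero]
  · by_cases hm : m ≤ n
    · have : partSum (fun i' => matOf t i' j) m = chi t ⟨m - 1, by omega⟩ j := by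
        have := colPS_matOf ht ⟨m - 1, by omega⟩ j
        unfold colPS at this
        rwa [show ((⟨m - 1, by omega⟩ : Fin n) : ℕ) + 1 = m by show m - 1 + 1 = m; omega]
          at this
      rw [this]
      exact chi_mem t _ j
    · right
      rw [partSum_of_ge _ (by omega)]
      -- total column sum is 1
      have := colPS_matOf ht ⟨n - 1, by omega⟩ j
      unfold colPS at this
      rw [show ((⟨n - 1, by omega⟩ : Fin n) : ℕ) + 1 = n by show n - 1 + 1 = n; omega] at this
      rw [← partSum_of_ge (fun i' => matOf t i' j) (le_refl n), this]
      unfold chi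
      rw [if_pos]
      obtain ⟨_, hbot⟩ := ht
      exact ⟨⟨j.1, by show (j : ℕ) < n - 1 + 1; omega⟩, hbot ⟨n - 1, by omega⟩ rfl j⟩

lemma matOf_col_sum (ht : IsCompleteMT t) (j : Fin n) : ∑ i', matOf t i' j = 1 := by
  have hn : 0 < n := j.pos
  rw [← partSum_of_ge (fun i' => matOf t i' j) (le_refl n)]
  have := colPS_matOf ht ⟨n - 1, by omega⟩ j
  unfold colPS at this
  rw [show ((⟨n - 1, by omega⟩ : Fin n) : ℕ) + 1 = n by show n - 1 + 1 = n; omega] at this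
  rw [this]
  unfold chi
  rw [if_pos]
  obtain ⟨_, hbot⟩ := ht
  exact ⟨⟨j.1, by show (j : ℕ) < n - 1 + 1; omega⟩, hbot ⟨n - 1, by omega⟩ rfl j⟩

lemma matOf_isASM (ht : IsCompleteMT t) : IsASM (matOf t) := by
  refine ⟨matOf_entries, matOf_row_sum ht, matOf_col_sum ht, ?_, ?_⟩
  · intro i j₁ j₂ hlt h1 h2 hz
    exact partSum_alt (matOf_row_ps ht i) j₁ j₂ hlt h1 h2 hz
  · intro j i₁ i₂ hlt h1 h2 hz
    exact partSum_alt (matOf_col_ps ht j) i₁ i₂ hlt h1 h2 hz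

end TriSide


section Final
open Finset
variable {n : ℕ} {A : Matrix (Fin n) (Fin n) ℤ} {t : Triangle n}

lemma triOf_isCMT (hA : IsASM A) : IsCompleteMT (triOf A) :=
  ⟨⟨triOf_strictMono hA, fun i i' h j => triOf_interlace hA i i' h j⟩,
    fun i hi j => triOf_bottom hA i hi j⟩

lemma chi_triOf (hA : IsASM A) (i j : Fin n) : chi (triOf A) i j = colPS A i j := by
  unfold chi
  rcases colPS_mem hA i j with h | h
  · rw [h, if_neg]
    intro he
    have := (triOf_exists_iff hA i ((j : ℕ) + 1)).mp he
    obtain ⟨j', hj', hc⟩ := mem_valsA.mp this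
    have : j' = j := Fin.ext (by omega)
    rw [this] at hc
    rw [hc] at h
    exact absurd h (by norm_num)
  · rw [h, if_pos]
    apply (triOf_exists_iff hA i ((j : ℕ) + 1)).mpr
    exact mem_valsA.mpr ⟨j, rfl, h⟩

lemma matOf_triOf (hA : IsASM A) : matOf (triOf A) = A := by
  funext i j
  show matOf (triOf A) i j = A i j
  unfold matOf
  by_cases h : 0 < (i : ℕ)
  · rw [dif_pos h, chi_triOf hA, chi_triOf hA,
      colPS_succ (⟨(i : ℕ) - 1, by omega⟩ : Fin n) i j (by show (i : ℕ) - 1 + 1 = (i : ℕ); omega)]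
    ring
  · rw [dif_neg h, chi_triOf hA, colPS_zero_row j i (by omega)]
    ring

lemma triOf_matOf (ht : IsCompleteMT t) : triOf (matOf t) = t := by
  funext i k
  have hs : ∀ m, m ∈ valsA (matOf t) i ↔ ∃ k', t i k' = m := by
    intro m
    rw [mem_valsA]
    constructor
    · rintro ⟨j, hj1, hj2⟩
      rw [colPS_matOf ht i j] at hj2
      unfold chi at hj2
      by_cases he : ∃ k', t i k' = (j : ℕ) + 1
      · obtain ⟨k', hk'⟩ := he
        exact ⟨k', by omega⟩
      · rw [if_neg he] at hj2
        exact absurd hj2 (by norm_num)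
    · rintro ⟨k', hk'⟩
      have hb := entry_bounds ht i k'
      refine ⟨⟨m - 1, by omega⟩, by show m - 1 + 1 = m; omega, ?_⟩
      rw [colPS_matOf ht i]
      unfold chi
      rw [if_pos ⟨k', by show t i k' = m - 1 + 1; omega⟩]
  exact (enumOf_eq_of_strictMono (ht.1.1 i) hs).2.2 k

lemma triOf_val_bounds (hA : IsASM A) (i : Fin n) (k : Fin ((i : ℕ) + 1)) :
    1 ≤ triOf A i k ∧ triOf A i k ≤ n := by
  have := (triOf_exists_iff hA i (triOf A i k)).mp ⟨k, rfl⟩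
  obtain ⟨j, hj, _⟩ := mem_valsA.mp this
  have := j.isLt
  omega

lemma colPS_one_of_entry_one (hA : IsASM A) {i j : Fin n} (h : A i j = 1) :
    colPS A i j = 1 := by
  by_cases h0 : 0 < (i : ℕ)
  · have hstep := colPS_succ (A := A) (⟨(i : ℕ) - 1, by omega⟩ : Fin n) i j
      (by show (i : ℕ) - 1 + 1 = (i : ℕ); omega)
    rcases colPS_mem hA ⟨(i : ℕ) - 1, by omega⟩ j with h' | h' <;>
      rcases colPS_mem hA i j with h'' | h'' <;> omega
  · rw [colPS_zero_row j i (by omega)]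
    exact h

lemma isNewEntry_iff (hA : IsASM A) (i : Fin n) (k : Fin ((i : ℕ) + 1)) (j : Fin n)
    (hj : (j : ℕ) + 1 = triOf A i k) :
    IsNewEntry (triOf A) i k ↔ A i j = 1 := by
  have hv : colPS A i j = 1 := by
    have := (triOf_exists_iff hA i (triOf A i k)).mp ⟨k, rfl⟩
    obtain ⟨j', hj', hc⟩ := mem_valsA.mp this
    have : j' = j := Fin.ext (by omega)
    rwa [this] at hc
  by_cases h0 : 0 < (i : ℕ)
  · set ip : Fin n := ⟨(i : ℕ) - 1, by omega⟩ with hip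
    have hstep := colPS_succ (A := A) ip i j (by show (i : ℕ) - 1 + 1 = (i : ℕ); omega)
    have hmem := colPS_mem hA ip j
    constructor
    · intro hnew
      have hne : ∀ k' : Fin ((ip : ℕ) + 1), triOf A ip k' ≠ triOf A i k :=
        hnew ip (by show (i : ℕ) - 1 + 1 = (i : ℕ); omega)
      have hnot : colPS A ip j ≠ 1 := by
        intro hc
        have hmem2 : triOf A i k ∈ valsA A ip := mem_valsA.mpr ⟨j, hj, hc⟩
        obtain ⟨k', hk'⟩ := (triOf_exists_iff hA ip (triOf A i k)).mpr hmem2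
        exact hne k' hk'
      rcases hmem with h' | h'
      · omega
      · exact absurd h' hnot
    · intro hone
      intro i' hi' k' hne
      have hii : i' = ip := Fin.ext (by show (i' : ℕ) = (i : ℕ) - 1; omega)
      subst hii
      have hmem2 := (triOf_exists_iff hA ip (triOf A i k)).mp ⟨k', hne⟩
      obtain ⟨j', hj', hc⟩ := mem_valsA.mp hmem2
      have : j' = j := Fin.ext (by omega)
      rw [this] at hc
      omega
  · constructor
    · intro _
      rw [← colPS_zero_row (A := A) j i (by omega)]
      exact hv
    · intro _ i' hi' k'
      exfalso
      omega

open Classical in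
lemma Nplus_eq_newCount (hA : IsASM A) : Nplus A = newCount (triOf A) := by
  have hnc : newCount (triOf A)
      = (Finset.univ.filter
          (fun p : (i : Fin n) × Fin ((i : ℕ) + 1) => IsNewEntry (triOf A) p.1 p.2)).card := by
    rw [newCount, Nat.card_eq_fintype_card, Fintype.card_subtype]
  rw [hnc, Nplus]
  symm
  apply Finset.card_bij (fun p _ =>
    ((p.1, ⟨triOf A p.1 p.2 - 1,
      by have := triOf_val_bounds hA p.1 p.2; omega⟩) : Fin n × Fin n))
  · rintro ⟨i, k⟩ hp
    rw [Finset.mem_filter] at hp ⊢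
    refine ⟨Finset.mem_univ _, ?_⟩
    have hb := triOf_val_bounds hA i k
    exact (isNewEntry_iff hA i k ⟨triOf A i k - 1, by omega⟩ (by show triOf A i k - 1 + 1 = _; omega)).mp hp.2
  · rintro ⟨i₁, k₁⟩ h₁ ⟨i₂, k₂⟩ h₂ he
    simp only [Prod.mk.injEq] at he
    obtain ⟨hi, hk⟩ := he
    subst hi
    have hb₁ := triOf_val_bounds hA i₁ k₁
    have hb₂ := triOf_val_bounds hA i₁ k₂
    have hkv : triOf A i₁ k₁ = triOf A i₁ k₂ := by
      have := congrArg Fin.val hk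
      simp at this
      omega
    have : k₁ = k₂ := (triOf_strictMono hA i₁).injective hkv
    rw [this]
  · rintro ⟨i, j⟩ hq
    rw [Finset.mem_filter] at hq
    have h1 : A i j = 1 := hq.2
    have hcol : colPS A i j = 1 := colPS_one_of_entry_one hA h1
    obtain ⟨k, hk⟩ := (triOf_exists_iff hA i ((j : ℕ) + 1)).mpr (mem_valsA.mpr ⟨j, rfl, hcol⟩)
    refine ⟨⟨i, k⟩, ?_, ?_⟩
    · rw [Finset.mem_filter]
      exact ⟨Finset.mem_univ _,
        (isNewEntry_iff hA i k j (by omega)).mpr h1⟩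
    · have hje : (⟨triOf A i k - 1,
          by have := triOf_val_bounds hA i k; omega⟩ : Fin n) = j :=
        Fin.ext (by show triOf A i k - 1 = (j : ℕ); omega)
      show (i, _) = (i, j)
      rw [hje]

end Final


open Classical in
/-- There is a bijection between `n×n` alternating sign matrices and complete
monotone triangles of size `n`, under which the number of `+1` entries of the
matrix equals the number of entries of the triangle not occurring in the
preceding row; explicitly, the entries of row `i` of the triangle are exactly
those `j` (as `1`-based column indices) such that the sum of the first `i+1`
entries of column `j` of the matrix equals `1`. -/
theorem asm_monotone_triangle_bijection (n : ℕ) :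
    ∃ F : {A : Matrix (Fin n) (Fin n) ℤ // IsASM A} → {t : Triangle n // IsCompleteMT t},
      Function.Bijective F ∧
      (∀ A, Nplus A.1 = newCount (F A).1) ∧
      (∀ A (i : Fin n) (m : ℕ),
        (∃ k, (F A).1 i k = m) ↔
          ∃ j : Fin n, (j : ℕ) + 1 = m ∧
            (∑ i' : Fin n, if (i' : ℕ) ≤ (i : ℕ) then A.1 i' j else 0) = 1) := by
  classical
  refine ⟨fun A => ⟨triOf A.1, triOf_isCMT A.2⟩, ?_, ?_, ?_⟩
  · rw [Function.bijective_iff_has_inverse]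
    refine ⟨fun t => ⟨matOf t.1, matOf_isASM t.2⟩, ?_, ?_⟩
    · rintro ⟨A, hA⟩
      exact Subtype.ext (matOf_triOf hA)
    · rintro ⟨t, ht⟩
      exact Subtype.ext (triOf_matOf ht)
  · intro A
    exact Nplus_eq_newCount A.2
  · intro A i m
    rw [show (((fun A : {A : Matrix (Fin n) (Fin n) ℤ // IsASM A} =>
        (⟨triOf A.1, triOf_isCMT A.2⟩ : {t : Triangle n // IsCompleteMT t})) A).1) = triOf A.1
      from rfl]
    rw [triOf_exists_iff A.2 i m, mem_valsA]
    apply exists_congr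
    intro j
    rw [colPS_eq_sum]
end

section
/- Define W recursively on integer tuples by W(a₁) = 1 and W(a₁,...,aₙ) = Σ*_{b₁=a₁}^{a₂} ··· Σ*_{b_{n−1}=a_{n−1}}^{aₙ} W(b₁,...,b_{n−1}), where Σ*_{i=r}^{s} f(i) = ½f(r) + f(r+1) + ··· + f(s−1) + ½f(s) for r < s, Σ*_{i=r}^{r} f = 0, and Σ*_{i=r}^{s} f = −Σ*_{i=s}^{r} f for r > s. Then W(a₁,...,aₙ) = ∏_{1≤i<j≤n} (a_j − a_i)/(j − i). -/
/-- The coefficient with which `f i` enters the modified sum `Σ*_{i=r}^{s} f i`: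
for `r < s` the endpoints are weighted `1/2` and interior points `1`; for
`r = s` the sum is `0`; and `Σ*_{i=r}^{s} = −Σ*_{i=s}^{r}` for `r > s`. -/
def starCoeff (r s i : ℤ) : ℚ :=
  if r < s then
    (if i = r ∨ i = s then 1 / 2 else if r < i ∧ i < s then 1 else 0)
  else if s < r then
    -(if i = r ∨ i = s then 1 / 2 else if s < i ∧ i < r then 1 else 0)
  else 0

/-- The modified summation operator `Σ*_{i=r}^{s} f i`, equal to
`½f(r) + f(r+1) + ⋯ + f(s−1) + ½f(s)` for `r < s`, to `0` for `r = s`, and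
antisymmetric in `r, s`. -/
noncomputable def starSum (r s : ℤ) (f : ℤ → ℚ) : ℚ :=
  ∑ᶠ i : ℤ, starCoeff r s i * f i

/-- The function `W` on integer tuples, defined by `W(a₁) = 1` and the recursion
`W(a₁,…,aₙ) = Σ*_{b₁=a₁}^{a₂} ⋯ Σ*_{b_{n−1}=a_{n−1}}^{aₙ} W(b₁,…,b_{n−1})`
(the nested modified sums being expanded multilinearly, i.e. as the weighted sum
over tuples `b` of the product of the `Σ*`-coefficients).  Here `W n` takes
tuples of length `n+1`. -/
noncomputable def W : (n : ℕ) → (Fin (n + 1) → ℤ) → ℚ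
  | 0, _ => 1
  | n + 1, a =>
    ∑ᶠ b : Fin (n + 1) → ℤ,
      (∏ i : Fin (n + 1), starCoeff (a i.castSucc) (a i.succ) (b i)) * W n b

def gcoef (s i : ℤ) : ℚ := if i < s then 1 else if i = s then 1/2 else 0

theorem starCoeff_eq_g (r s i : ℤ) : starCoeff r s i = gcoef s i - gcoef r i := by
  unfold starCoeff gcoef
  split_ifs <;> first | (exfalso; omega) | norm_num

theorem starCoeff_eq_zero {r s i : ℤ} (hi : i ∉ Finset.Icc (min r s) (max r s)) :
    starCoeff r s i = 0 := by
  simp only [Finset.mem_Icc, not_and_or, not_le] at hi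
  unfold starCoeff
  split_ifs <;> first | rfl | (exfalso; omega)

theorem starSum_support (r s : ℤ) (f : ℤ → ℚ) :
    Function.support (fun i => starCoeff r s i * f i) ⊆ ↑(Finset.Icc (min r s) (max r s)) := by
  intro i hi
  by_contra h
  have h0 : starCoeff r s i = 0 := starCoeff_eq_zero (by simpa using h)
  exact hi (by simp [h0])

theorem starSum_eq_finset (r s : ℤ) (f : ℤ → ℚ) :
    starSum r s f = ∑ i ∈ Finset.Icc (min r s) (max r s), starCoeff r s i * f i :=
  finsum_eq_sum_of_support_subset _ (starSum_support r s f)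

theorem starSum_split (r s : ℤ) (f : ℤ → ℚ) :
    starSum r (s+1) f = starSum r s f + starSum s (s+1) f := by
  unfold starSum
  rw [← finsum_add_distrib
    (Set.Finite.subset (Finset.Icc (min r s) (max r s)).finite_toSet (starSum_support r s f))
    (Set.Finite.subset (Finset.Icc (min s (s+1)) (max s (s+1))).finite_toSet
      (starSum_support s (s+1) f))]
  apply finsum_congr
  intro i
  rw [starCoeff_eq_g, starCoeff_eq_g, starCoeff_eq_g]
  ring

theorem starSum_single (t : ℤ) (f : ℤ → ℚ) :
    starSum t (t+1) f = (f t + f (t+1))/2 := by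
  rw [starSum_eq_finset]
  have h1 : min t (t+1) = t := by omega
  have h2 : max t (t+1) = t+1 := by omega
  rw [h1, h2]
  have h3 : Finset.Icc t (t+1) = {t, t+1} := by
    ext i; simp only [Finset.mem_Icc, Finset.mem_insert, Finset.mem_singleton]; omega
  rw [h3, Finset.sum_insert (by simp), Finset.sum_singleton]
  have c1 : starCoeff t (t+1) t = 1/2 := by unfold starCoeff; split_ifs <;> first | (exfalso; omega) | norm_num
  have c2 : starCoeff t (t+1) (t+1) = 1/2 := by
    unfold starCoeff; split_ifs <;> first | (exfalso; omega) | norm_num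
  rw [c1, c2]; ring

theorem starSum_self (t : ℤ) (f : ℤ → ℚ) : starSum t t f = 0 := by
  unfold starSum
  have : ∀ i, starCoeff t t i * f i = 0 := by
    intro i; rw [starCoeff_eq_g]; ring
  rw [finsum_congr this, finsum_zero]

theorem starSum_neg (r s : ℤ) (f : ℤ → ℚ) : starSum r s f = - starSum s r f := by
  unfold starSum
  rw [← finsum_neg_distrib]
  apply finsum_congr
  intro i
  rw [starCoeff_eq_g, starCoeff_eq_g]
  ring

theorem starSum_antideriv {f F : ℤ → ℚ} (hF : ∀ x : ℤ, F (x+1) - F x = (f x + f (x+1))/2)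
    (r s : ℤ) : starSum r s f = F s - F r := by
  have key : ∀ (k : ℕ) (r : ℤ), starSum r (r + k) f = F (r + k) - F r := by
    intro k
    induction k with
    | zero => intro r; simpa using starSum_self r f
    | succ k IH =>
      intro r
      push_cast
      rw [show r + ((k:ℤ)+1) = (r + (k:ℤ)) + 1 by ring, starSum_split, IH,
        starSum_single]
      have := hF (r + (k:ℤ))
      linarith
  rcases le_or_gt r s with h | h
  · obtain ⟨k, hk⟩ := Int.le.dest h
    rw [← hk]
    exact key k r
  · obtain ⟨k, hk⟩ := Int.le.dest h.le
    rw [starSum_neg, ← hk, key k s]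
    ring


open Polynomial

theorem coeff_comp_X_add_one {u : ℚ[X]} {k : ℕ} (h : u.natDegree ≤ k) :
    (u.comp (X+1)).coeff k = u.coeff k := by
  have hC : ((X:ℚ[X]) + C 1) = X + 1 := by simp
  have h1 : ((X:ℚ[X])+1).natDegree = 1 := by rw [← hC]; exact Polynomial.natDegree_X_add_C 1
  have hlc : ((X:ℚ[X])+1).leadingCoeff = 1 := by rw [← hC]; exact Polynomial.leadingCoeff_X_add_C 1
  rcases lt_or_eq_of_le h with h | h
  · rw [Polynomial.coeff_eq_zero_of_natDegree_lt, Polynomial.coeff_eq_zero_of_natDegree_lt h]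
    rw [Polynomial.natDegree_comp, h1, mul_one]; exact h
  · subst h
    have := Polynomial.coeff_comp_degree_mul_degree (p := u) (q := X + 1) (by rw [h1]; omega)
    rw [h1, mul_one, hlc, one_pow, mul_one] at this
    rw [this]; rfl


theorem delta_anti : ∀ (d : ℕ) (p : ℚ[X]), p.natDegree ≤ d → ∃ q : ℚ[X],
    (∀ x : ℚ, q.eval (x+1) - q.eval x = p.eval x) ∧ q.natDegree ≤ d + 1 ∧
      q.coeff (d+1) = p.coeff d / ((d : ℚ) + 1) := by
  intro d
  induction d with
  | zero =>
    intro p hp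
    have hpC : p = C (p.coeff 0) := Polynomial.eq_C_of_natDegree_le_zero hp
    refine ⟨C (p.coeff 0) * X, ?_, ?_, ?_⟩
    · intro x; rw [hpC]; simp; ring
    · exact le_trans (Polynomial.natDegree_C_mul_le _ _) (by simp)
    · simp
  | succ d IH =>
    intro p hp
    set c : ℚ := p.coeff (d+1) with hc
    set q₁ : ℚ[X] := C (c / ((d:ℚ)+2)) * X^(d+2) with hq₁
    have hcomp : q₁.comp (X+1) = C (c / ((d:ℚ)+2)) * (X+1)^(d+2) := by
      rw [hq₁]; simp [Polynomial.mul_comp, Polynomial.pow_comp]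
    set r : ℚ[X] := p - (q₁.comp (X+1) - q₁) with hr
    have hrc : ∀ m : ℕ, r.coeff m
        = p.coeff m - (((d+2).choose m : ℚ) * (c / ((d:ℚ)+2))
            - (if m = d+2 then c / ((d:ℚ)+2) else 0)) := by
      intro m
      rw [hr, hcomp, hq₁]
      simp only [Polynomial.coeff_sub, Polynomial.coeff_C_mul, Polynomial.coeff_X_add_one_pow,
        Polynomial.coeff_X_pow, mul_ite, mul_zero, mul_one]
      have : ((d:ℚ)+2) = ((d+2 : ℕ) : ℚ) := by push_cast; ring
      split_ifs <;> ring
    have hd2 : ((d:ℚ) + 2) ≠ 0 := by positivity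
    have hrd : r.natDegree ≤ d := by
      rw [Polynomial.natDegree_le_iff_coeff_eq_zero]
      intro m hm
      rw [hrc m]
      rcases eq_or_lt_of_le (show d + 1 ≤ m from hm) with h1 | h1
      · rw [← h1]
        have : ((d+2).choose (d+1) : ℚ) = (d:ℚ) + 2 := by
          rw [Nat.choose_succ_self_right]; push_cast; ring
        rw [this, if_neg (by omega)]
        field_simp
        rw [hc]; ring
      · have hp0 : p.coeff m = 0 := Polynomial.coeff_eq_zero_of_natDegree_lt (lt_of_le_of_lt hp h1)
        rcases eq_or_lt_of_le (Nat.succ_le_of_lt h1) with h2 | h2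
        · have h3 : m = d + 2 := by omega
          subst h3
          rw [if_pos rfl, hp0, Nat.choose_self]; push_cast; ring
        · rw [hp0, Nat.choose_eq_zero_of_lt (by omega), if_neg (by omega)]; push_cast; ring
    obtain ⟨q₂, hq₂e, hq₂d, -⟩ := IH r hrd
    refine ⟨q₁ + q₂, ?_, ?_, ?_⟩
    · intro x
      have h1 : r.eval x = p.eval x - (q₁.eval (x+1) - q₁.eval x) := by
        rw [hr]; simp [Polynomial.eval_comp]
      have := hq₂e x
      simp only [Polynomial.eval_add]
      rw [h1] at this; linarith
    · refine le_trans (Polynomial.natDegree_add_le _ _) (max_le ?_ (by omega))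
      exact le_trans (Polynomial.natDegree_C_mul_le _ _) (by simp)
    · have h2 : q₂.coeff (d+2) = 0 := Polynomial.coeff_eq_zero_of_natDegree_lt (by omega)
      rw [Polynomial.coeff_add, h2, add_zero, hq₁]
      rw [Polynomial.coeff_C_mul, Polynomial.coeff_X_pow, if_pos rfl]
      push_cast; ring

noncomputable def starAnti (p : ℚ[X]) : ℚ[X] := Classical.choose (delta_anti p.natDegree p le_rfl)

theorem starAnti_spec (p : ℚ[X]) :
    (∀ x : ℚ, (starAnti p).eval (x+1) - (starAnti p).eval x = p.eval x) ∧
    (starAnti p).natDegree ≤ p.natDegree + 1 ∧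
    (starAnti p).coeff (p.natDegree + 1) = p.coeff p.natDegree / ((p.natDegree : ℚ) + 1) :=
  Classical.choose_spec (delta_anti p.natDegree p le_rfl)

noncomputable def qfam : ℕ → ℚ[X]
  | 0 => 1
  | (k+1) => starAnti ((qfam k + (qfam k).comp (X+1)) * C (1/2))

theorem qfam_deg_coeff : ∀ k : ℕ, (qfam k).natDegree = k ∧ (qfam k).coeff k = 1/(k.factorial:ℚ) := by
  intro k
  induction k with
  | zero => constructor <;> simp [qfam]
  | succ k IH =>
    obtain ⟨hdeg, hcoef⟩ := IH
    set p : ℚ[X] := (qfam k + (qfam k).comp (X+1)) * C (1/2) with hp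
    have hpc : p.coeff k = 1/(k.factorial:ℚ) := by
      rw [hp, Polynomial.coeff_mul_C, Polynomial.coeff_add,
        coeff_comp_X_add_one (le_of_eq hdeg), hcoef]
      ring
    have hpd : p.natDegree ≤ k := by
      refine le_trans (Polynomial.natDegree_mul_le) ?_
      simp only [Polynomial.natDegree_C, add_zero]
      refine le_trans (Polynomial.natDegree_add_le _ _) (max_le (le_of_eq hdeg) ?_)
      calc ((qfam k).comp (X+1)).natDegree ≤ (qfam k).natDegree * (X+1:ℚ[X]).natDegree :=
            Polynomial.natDegree_comp_le
        _ ≤ k := by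
            have : ((X:ℚ[X])+1).natDegree = 1 := by
              have : ((X:ℚ[X]) + C 1) = X + 1 := by simp
              rw [← this]; exact Polynomial.natDegree_X_add_C 1
            rw [this, mul_one, hdeg]
    have hkfac : (1:ℚ)/(k.factorial:ℚ) ≠ 0 := by
      simp [Nat.factorial_ne_zero]
    have hpdeq : p.natDegree = k := by
      refine le_antisymm hpd (Polynomial.le_natDegree_of_ne_zero ?_)
      rw [hpc]; exact hkfac
    obtain ⟨-, h2, h3⟩ := starAnti_spec p
    have hq : qfam (k+1) = starAnti p := rfl
    constructor
    · refine le_antisymm (by rw [hq]; rw [hpdeq] at h2; exact h2) ?_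
      refine Polynomial.le_natDegree_of_ne_zero ?_
      rw [hq]
      rw [hpdeq] at h3
      rw [h3, hpc]
      have h4 : (0:ℚ) < (k.factorial:ℚ) := by exact_mod_cast k.factorial_pos
      positivity
    · rw [hq, hpdeq] at *
      rw [h3, hpc, Nat.factorial_succ]
      push_cast
      rw [div_div]
      ring


open Polynomial

theorem qfam_step (k : ℕ) (x : ℚ) :
    (qfam (k+1)).eval (x+1) - (qfam (k+1)).eval x
      = ((qfam k).eval x + (qfam k).eval (x+1))/2 := by
  have h := (starAnti_spec ((qfam k + (qfam k).comp (X+1)) * C (1/2))).1 x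
  have hq : qfam (k+1) = starAnti ((qfam k + (qfam k).comp (X+1)) * C (1/2)) := rfl
  rw [hq, h]
  simp only [Polynomial.eval_mul, Polynomial.eval_add, Polynomial.eval_comp,
    Polynomial.eval_C, Polynomial.eval_X, Polynomial.eval_one]
  ring

theorem starSum_qfam (k : ℕ) (r s : ℤ) :
    starSum r s (fun x : ℤ => (qfam k).eval (x:ℚ)) =
      (qfam (k+1)).eval (s:ℚ) - (qfam (k+1)).eval (r:ℚ) := by
  apply starSum_antideriv (F := fun x : ℤ => (qfam (k+1)).eval (x:ℚ))
  intro x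
  have h := qfam_step k (x:ℚ)
  push_cast
  linarith

theorem det_diff (n : ℕ) (N : Matrix (Fin (n+2)) (Fin (n+2)) ℚ) (h0 : ∀ i, N i 0 = 1) :
    N.det = (Matrix.of fun (i j : Fin (n+1)) => N i.succ j.succ - N i.castSucc j.succ).det := by
  set B : Matrix (Fin (n+2)) (Fin (n+2)) ℚ := Matrix.of fun i j =>
    Fin.cases (N 0 j) (fun i' => N i'.succ j - N i'.castSucc j) i with hB
  have h1 : N.det = B.det := by
    apply Matrix.det_eq_of_forall_row_eq_smul_add_pred (c := fun _ => 1)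
    · intro j; simp [hB]
    · intro i j
      simp only [hB, Matrix.of_apply, Fin.cases_succ]
      ring
  have hB0 : ∀ i : Fin (n+1), B i.succ 0 = 0 := by
    intro i; simp [hB, h0]
  have hB00 : B 0 0 = 1 := by simp [hB, h0]
  rw [h1, Matrix.det_succ_column_zero, Fin.sum_univ_succ]
  simp only [hB0, mul_zero, zero_mul, Finset.sum_const_zero, add_zero, hB00, mul_one,
    Fin.val_zero, pow_zero, one_mul, Fin.succAbove_zero]
  have h2 : B.submatrix Fin.succ Fin.succ
      = Matrix.of fun (i j : Fin (n+1)) => N i.succ j.succ - N i.castSucc j.succ := by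
    ext i j
    simp [hB, Matrix.submatrix_apply]
  rw [h2]

theorem W_eq_det : ∀ (n : ℕ) (a : Fin (n+1) → ℤ),
    W n a = (Matrix.of fun i j : Fin (n+1) => (qfam (j:ℕ)).eval ((a i : ℚ))).det := by
  intro n
  induction n with
  | zero =>
    intro a
    rw [Matrix.det_fin_one]
    show (1:ℚ) = (qfam 0).eval _
    simp [qfam]
  | succ n IH =>
    intro a
    show (∑ᶠ b : Fin (n+1) → ℤ, (∏ i, starCoeff (a i.castSucc) (a i.succ) (b i)) * W n b) = _
    set T : Fin (n+1) → Finset ℤ := fun i =>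
      Finset.Icc (min (a i.castSucc) (a i.succ)) (max (a i.castSucc) (a i.succ)) with hT
    have hsupp : (Function.support fun b : Fin (n+1) → ℤ =>
        (∏ i, starCoeff (a i.castSucc) (a i.succ) (b i)) * W n b) ⊆ ↑(Fintype.piFinset T) := by
      intro b hb
      by_contra h
      simp only [Fintype.mem_piFinset, Finset.mem_coe, not_forall] at h
      obtain ⟨i, hi⟩ := h
      apply hb
      have h0 : starCoeff (a i.castSucc) (a i.succ) (b i) = 0 := starCoeff_eq_zero hi
      show (∏ i, starCoeff (a i.castSucc) (a i.succ) (b i)) * W n b = 0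
      rw [Finset.prod_eq_zero (Finset.mem_univ i) h0, zero_mul]
    rw [finsum_eq_sum_of_support_subset _ hsupp]
    set D : Matrix (Fin (n+1)) (Fin (n+1)) ℚ := Matrix.of fun i j =>
      (qfam ((j:ℕ)+1)).eval ((a i.succ : ℚ)) - (qfam ((j:ℕ)+1)).eval ((a i.castSucc : ℚ))
      with hD
    have key : ∑ b ∈ Fintype.piFinset T,
        (∏ i, starCoeff (a i.castSucc) (a i.succ) (b i)) * W n b = D.det := by
      have step1 : ∀ b : Fin (n+1) → ℤ,
          (∏ i, starCoeff (a i.castSucc) (a i.succ) (b i)) * W n b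
          = ∑ σ : Equiv.Perm (Fin (n+1)), ((Equiv.Perm.sign σ : ℤ) : ℚ) *
              ∏ i, (starCoeff (a i.castSucc) (a i.succ) (b i) *
                (qfam ((σ.symm i : Fin (n+1)):ℕ)).eval ((b i : ℚ))) := by
        intro b
        rw [IH b, Matrix.det_apply', Finset.mul_sum]
        apply Finset.sum_congr rfl
        intro σ _
        have reindex : ∏ i, (Matrix.of fun i j : Fin (n+1) =>
              (qfam (j:ℕ)).eval ((b i : ℚ))) (σ i) i
            = ∏ i, (qfam ((σ.symm i : Fin (n+1)):ℕ)).eval ((b i : ℚ)) := by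
          rw [← Equiv.prod_comp σ (fun i => (qfam ((σ.symm i : Fin (n+1)):ℕ)).eval ((b i : ℚ)))]
          apply Finset.prod_congr rfl
          intro i _
          simp
        rw [reindex, Finset.prod_mul_distrib]
        ring
      rw [Finset.sum_congr rfl (fun b _ => step1 b), Finset.sum_comm]
      have step2 : ∀ σ : Equiv.Perm (Fin (n+1)),
          ∑ b ∈ Fintype.piFinset T, ((Equiv.Perm.sign σ : ℤ) : ℚ) *
              ∏ i, (starCoeff (a i.castSucc) (a i.succ) (b i) *
                (qfam ((σ.symm i : Fin (n+1)):ℕ)).eval ((b i : ℚ)))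
          = ((Equiv.Perm.sign σ : ℤ) : ℚ) * ∏ i, D i (σ.symm i) := by
        intro σ
        rw [← Finset.mul_sum, ← Finset.prod_univ_sum T
          (fun i x => starCoeff (a i.castSucc) (a i.succ) x *
            (qfam ((σ.symm i : Fin (n+1)):ℕ)).eval ((x : ℚ)))]
        congr 1
        apply Finset.prod_congr rfl
        intro i _
        have : ∑ x ∈ T i, starCoeff (a i.castSucc) (a i.succ) x *
              (qfam ((σ.symm i : Fin (n+1)):ℕ)).eval ((x : ℚ))
            = starSum (a i.castSucc) (a i.succ)
                (fun x => (qfam ((σ.symm i : Fin (n+1)):ℕ)).eval ((x : ℚ))) :=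
          (starSum_eq_finset _ _ _).symm
        rw [this, starSum_qfam]
        simp [hD]
      rw [Finset.sum_congr rfl (fun σ _ => step2 σ)]
      have step3 : ∀ σ : Equiv.Perm (Fin (n+1)),
          ((Equiv.Perm.sign σ : ℤ) : ℚ) * ∏ i, D i (σ.symm i)
          = (fun τ : Equiv.Perm (Fin (n+1)) =>
              ((Equiv.Perm.sign τ : ℤ) : ℚ) * ∏ i, D.transpose (τ i) i) σ⁻¹ := by
        intro σ
        simp only [Matrix.transpose_apply, Equiv.Perm.sign_inv]
        rfl
      rw [Finset.sum_congr rfl (fun σ _ => step3 σ)]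
      rw [show (∑ σ : Equiv.Perm (Fin (n+1)), (fun τ : Equiv.Perm (Fin (n+1)) =>
            ((Equiv.Perm.sign τ : ℤ) : ℚ) * ∏ i, D.transpose (τ i) i) σ⁻¹)
          = ∑ τ : Equiv.Perm (Fin (n+1)),
              ((Equiv.Perm.sign τ : ℤ) : ℚ) * ∏ i, D.transpose (τ i) i
          from Fintype.sum_equiv (Equiv.inv _) _ _ (fun σ => rfl)]
      rw [← Matrix.det_transpose D, Matrix.det_apply']
    rw [key]
    have h0 : ∀ i : Fin (n+2),
        (Matrix.of fun i j : Fin (n+2) => (qfam (j:ℕ)).eval ((a i : ℚ))) i 0 = 1 := by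
      intro i; simp [qfam]
    rw [det_diff _ _ h0]
    have h2 : D = Matrix.of (fun (i j : Fin (n+1)) =>
        Matrix.of (fun i j : Fin (n+2) => (qfam (j:ℕ)).eval ((a i : ℚ))) i.succ j.succ
        - Matrix.of (fun i j : Fin (n+2) => (qfam (j:ℕ)).eval ((a i : ℚ))) i.castSucc j.succ) := by
      ext i j
      simp [hD, Fin.val_succ]
    rw [h2]

theorem range_fact (v : ℕ) : ∏ m ∈ Finset.range v, ((v:ℚ) - (m:ℚ)) = (v.factorial : ℚ) := by
  induction v with
  | zero => simp
  | succ v IH =>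
    rw [Finset.prod_range_succ']
    have h1 : ∀ m ∈ Finset.range v, (((v+1:ℕ)):ℚ) - (((m+1:ℕ)):ℚ) = (v:ℚ) - (m:ℚ) := by
      intro m _; push_cast; ring
    rw [Finset.prod_congr rfl h1, IH, Nat.factorial_succ]
    push_cast; ring

open Fin.NatCast in
theorem Iio_fact (n : ℕ) (j : Fin (n+1)) :
    ∏ i ∈ Finset.Iio j, (((j:ℕ):ℚ) - ((i:ℕ):ℚ)) = (((j:ℕ)).factorial : ℚ) := by
  rw [← range_fact (j:ℕ)]
  apply Finset.prod_nbij' (fun i : Fin (n+1) => (i:ℕ)) (fun m => (m : Fin (n+1)))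
  · intro i hi; simp only [Finset.mem_Iio, Fin.lt_def] at hi; simp [Finset.mem_range, hi]
  · intro m hm; simp only [Finset.mem_range] at hm
    simp only [Finset.mem_Iio, Fin.lt_def, Fin.val_natCast]
    have : m % (n+1) = m := Nat.mod_eq_of_lt (by omega)
    omega
  · intro i hi
    have : (i:ℕ) % (n+1) = (i:ℕ) := Nat.mod_eq_of_lt i.isLt
    ext; simp [Fin.val_natCast, this]
  · intro m hm; simp only [Finset.mem_range] at hm
    simp [Fin.val_natCast, Nat.mod_eq_of_lt (show m < n+1 by omega)]
  · intro i _; rfl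

theorem W_eq_prod' (n : ℕ) (a : Fin (n + 1) → ℤ) :
    W n a = ∏ i : Fin (n + 1), ∏ j : Fin (n + 1),
      (if (i : ℕ) < (j : ℕ) then ((a j : ℚ) - (a i : ℚ)) / ((j : ℚ) - (i : ℚ)) else 1) := by
  rw [W_eq_det n a]
  have hfac : ∀ j : ℕ, ((j.factorial : ℚ)) ≠ 0 := fun j => by
    exact_mod_cast j.factorial_ne_zero
  set m : Fin (n+1) → ℚ[X] := fun j => C (((j:ℕ).factorial : ℚ)) * qfam (j:ℕ) with hm
  have hdeg : ∀ j : Fin (n+1), (m j).natDegree = (j:ℕ) := by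
    intro j; rw [hm]
    rw [Polynomial.natDegree_C_mul (hfac _), (qfam_deg_coeff _).1]
  have hmonic : ∀ j, (m j).Monic := by
    intro j
    have h1 : (m j).natDegree = (j:ℕ) := hdeg j
    unfold Polynomial.Monic
    rw [Polynomial.leadingCoeff, h1, hm]
    simp only [Polynomial.coeff_C_mul, (qfam_deg_coeff ((j:ℕ))).2]
    field_simp
  have heval : ∀ (i j : Fin (n+1)), (qfam (j:ℕ)).eval ((a i : ℚ))
      = (1/((j:ℕ).factorial : ℚ)) * (m j).eval ((a i : ℚ)) := by
    intro i j
    rw [hm]; simp only [Polynomial.eval_mul, Polynomial.eval_C]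
    field_simp
  have hswap : ∏ i : Fin (n+1), ∏ j ∈ Finset.Ioi i, (((j:ℕ):ℚ) - ((i:ℕ):ℚ))
      = ∏ j : Fin (n+1), ∏ i ∈ Finset.Iio j, (((j:ℕ):ℚ) - ((i:ℕ):ℚ)) :=
    Finset.prod_comm' (by simp [Finset.mem_Ioi, Finset.mem_Iio, and_comm])
  calc (Matrix.of fun i j : Fin (n+1) => (qfam (j:ℕ)).eval ((a i : ℚ))).det
      = (Matrix.of fun i j : Fin (n+1) => (1/((j:ℕ).factorial : ℚ)) *
          (Matrix.of fun i j : Fin (n+1) => (m j).eval ((a i : ℚ))) i j).det := by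
        congr 1; ext i j; simp only [Matrix.of_apply]; exact heval i j
    _ = (∏ j : Fin (n+1), (1/((j:ℕ).factorial : ℚ))) *
          (Matrix.of fun i j : Fin (n+1) => (m j).eval ((a i : ℚ))).det :=
        Matrix.det_mul_row _ _
    _ = (∏ j : Fin (n+1), (1/((j:ℕ).factorial : ℚ))) *
          (Matrix.vandermonde fun i : Fin (n+1) => ((a i : ℚ))).det := by
        rw [← Matrix.det_eval_matrixOfPolynomials_eq_det_vandermonde _ m hdeg hmonic]
    _ = (∏ j : Fin (n+1), (1/((j:ℕ).factorial : ℚ))) *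
          ∏ i : Fin (n+1), ∏ j ∈ Finset.Ioi i, ((a j : ℚ) - (a i : ℚ)) := by
        rw [Matrix.det_vandermonde]
    _ = ∏ i : Fin (n + 1), ∏ j : Fin (n + 1),
        (if (i : ℕ) < (j : ℕ) then ((a j : ℚ) - (a i : ℚ)) / ((j : ℚ) - (i : ℚ)) else 1) := by
        have hRHS : (∏ i : Fin (n+1), ∏ j : Fin (n+1),
              (if (i:ℕ) < (j:ℕ) then ((a j : ℚ) - (a i : ℚ)) / (((j:ℕ):ℚ) - ((i:ℕ):ℚ)) else 1))
            = ∏ i : Fin (n+1), ∏ j ∈ Finset.Ioi i,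
              (((a j : ℚ) - (a i : ℚ)) / (((j:ℕ):ℚ) - ((i:ℕ):ℚ))) := by
          refine Finset.prod_congr rfl (fun i _ => ?_)
          rw [← Finset.prod_filter]
          congr 1
          ext j
          simp only [Finset.mem_filter, Finset.mem_univ, true_and, Finset.mem_Ioi, Fin.lt_def]
        rw [hRHS]
        have h2 : ∀ i : Fin (n+1), ∏ j ∈ Finset.Ioi i,
              (((a j:ℚ) - (a i:ℚ)) / (((j:ℕ):ℚ) - ((i:ℕ):ℚ)))
            = (∏ j ∈ Finset.Ioi i, ((a j:ℚ) - (a i:ℚ))) /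
                (∏ j ∈ Finset.Ioi i, (((j:ℕ):ℚ) - ((i:ℕ):ℚ))) :=
          fun i => Finset.prod_div_distrib _ _
        conv_rhs => rw [Finset.prod_congr rfl (fun i _ => h2 i), Finset.prod_div_distrib, hswap,
          Finset.prod_congr rfl (fun j (_ : j ∈ Finset.univ) => Iio_fact n j)]
        have h3 : (∏ j : Fin (n+1), (1/(((j:ℕ)).factorial : ℚ)))
            = (∏ j : Fin (n+1), (((j:ℕ)).factorial : ℚ))⁻¹ := by
          rw [← Finset.prod_inv_distrib]
          exact Finset.prod_congr rfl (fun j _ => one_div _)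
        rw [h3, div_eq_mul_inv, mul_comm]

/-- `W(a₁,…,aₙ) = ∏_{1 ≤ i < j ≤ n} (a_j − a_i)/(j − i)`. -/
theorem W_eq_prod (n : ℕ) (a : Fin (n + 1) → ℤ) :
    W n a = ∏ i : Fin (n + 1), ∏ j : Fin (n + 1),
      (if (i : ℕ) < (j : ℕ) then ((a j : ℚ) - (a i : ℚ)) / ((j : ℚ) - (i : ℚ)) else 1) :=
  W_eq_prod' n a
end

section
/- For integers a₁,...,aₙ, the product ∏_{1≤i<j≤n} (a_j − a_i)/(j − i) is an integer; indeed it equals the determinant of the n×n matrix whose (i,j) entry is the binomial coefficient C(a_i, j−1). -/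
/-- The binomial coefficient `C(a, k)` for an arbitrary integer `a`, given by the
polynomial formula `a(a−1)⋯(a−k+1)/k!`, as a rational number. -/
def intChoose (a : ℤ) (k : ℕ) : ℚ :=
  (∏ m ∈ Finset.range k, ((a : ℚ) - (m : ℚ))) / (Nat.factorial k : ℚ)

open Finset Polynomial

lemma descPoch_eval_prod (a : ℤ) (k : ℕ) :
    (descPochhammer ℤ k).eval a = ∏ m ∈ Finset.range k, (a - (m : ℤ)) := by
  induction k with
  | zero => simp
  | succ k ih => rw [descPochhammer_succ_eval, ih, Finset.prod_range_succ]

lemma intChoose_eq_cast (a : ℤ) (k : ℕ) :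
    intChoose a k = ((Ring.choose a k : ℤ) : ℚ) := by
  have h : (descPochhammer ℤ k).eval a = k.factorial • Ring.choose a k := by
    rw [Polynomial.eval_eq_smeval]
    exact Ring.descPochhammer_eq_factorial_smul_choose a k
  rw [descPoch_eval_prod] at h
  have hprod : (∏ m ∈ Finset.range k, ((a : ℚ) - (m : ℚ)))
      = ((∏ m ∈ Finset.range k, (a - (m : ℤ)) : ℤ) : ℚ) := by push_cast; ring_nf
  rw [intChoose, hprod, h]
  have : (k.factorial : ℚ) ≠ 0 := Nat.cast_ne_zero.mpr k.factorial_ne_zero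
  push_cast [nsmul_eq_mul]
  field_simp

lemma prod_ite_lt (n : ℕ) (f : Fin n → Fin n → ℚ) (i : Fin n) :
    (∏ j : Fin n, (if (i : ℕ) < (j : ℕ) then f i j else 1))
      = ∏ j ∈ Finset.Ioi i, f i j := by
  rw [show Finset.Ioi i = Finset.univ.filter (fun j : Fin n => (i : ℕ) < (j : ℕ)) by
    ext j; simp only [Finset.mem_Ioi, Finset.mem_filter, Finset.mem_univ, true_and, Fin.lt_def]]
  rw [Finset.prod_filter]

lemma prod_ite_fact (n : ℕ) :
    (∏ i : Fin n, ∏ j : Fin n,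
        (if (i : ℕ) < (j : ℕ) then ((j : ℚ) - (i : ℚ)) else 1))
      = ∏ j : Fin n, ((j : ℕ).factorial : ℚ) := by
  rw [Finset.prod_comm]
  refine Finset.prod_congr rfl fun j _ => ?_
  have h1 : (∏ i : Fin n, (if (i : ℕ) < (j : ℕ) then ((j : ℚ) - (i : ℚ)) else 1))
      = ∏ m ∈ Finset.range n, (if m < (j : ℕ) then ((j : ℚ) - (m : ℚ)) else 1) := by
    rw [Fin.prod_univ_eq_prod_range (fun m => if m < (j : ℕ) then ((j : ℚ) - (m : ℚ)) else 1) n]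
  have h2 : (Finset.range n).filter (· < (j : ℕ)) = Finset.range (j : ℕ) := by
    ext m; simp only [Finset.mem_filter, Finset.mem_range]
    exact ⟨fun h => h.2, fun h => ⟨h.trans j.isLt, h⟩⟩
  rw [h1, ← Finset.prod_filter, h2]
  have key := descPoch_eval_prod ((j : ℕ) : ℤ) (j : ℕ)
  rw [descPochhammer_eval_eq_descFactorial ℤ (j : ℕ) (j : ℕ), Nat.descFactorial_self] at key
  calc (∏ m ∈ Finset.range (j : ℕ), ((j : ℚ) - (m : ℚ)))
      = ((∏ m ∈ Finset.range (j : ℕ), (((j : ℕ) : ℤ) - (m : ℤ)) : ℤ) : ℚ) := by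
        push_cast; rfl
    _ = ((((j : ℕ).factorial : ℤ)) : ℚ) := by rw [← key]
    _ = (((j : ℕ).factorial : ℚ)) := by push_cast; rfl

/-- For integers `a₁,…,aₙ`, the product `∏_{1≤i<j≤n} (a_j − a_i)/(j − i)` equals
the determinant of the `n×n` matrix with `(i,j)` entry `C(a_i, j−1)`; in
particular it is an integer. -/
theorem prod_div_eq_det_choose (n : ℕ) (a : Fin n → ℤ) :
    (∏ i : Fin n, ∏ j : Fin n,
        (if (i : ℕ) < (j : ℕ) then ((a j : ℚ) - (a i : ℚ)) / ((j : ℚ) - (i : ℚ)) else 1)) =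
      Matrix.det (Matrix.of fun i j : Fin n => intChoose (a i) (j : ℕ)) ∧
    ∃ z : ℤ,
      (∏ i : Fin n, ∏ j : Fin n,
        (if (i : ℕ) < (j : ℕ) then ((a j : ℚ) - (a i : ℚ)) / ((j : ℚ) - (i : ℚ)) else 1)) = z := by
  -- split the LHS into numerator and denominator
  have hsplit : (∏ i : Fin n, ∏ j : Fin n,
        (if (i : ℕ) < (j : ℕ) then ((a j : ℚ) - (a i : ℚ)) / ((j : ℚ) - (i : ℚ)) else 1))
      = (∏ i : Fin n, ∏ j : Fin n, (if (i : ℕ) < (j : ℕ) then ((a j : ℚ) - (a i : ℚ)) else 1))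
      / (∏ i : Fin n, ∏ j : Fin n, (if (i : ℕ) < (j : ℕ) then ((j : ℚ) - (i : ℚ)) else 1)) := by
    rw [← Finset.prod_div_distrib]
    refine Finset.prod_congr rfl fun i _ => ?_
    rw [← Finset.prod_div_distrib]
    refine Finset.prod_congr rfl fun j _ => ?_
    split <;> simp
  -- numerator is the Vandermonde determinant
  have hnum : (∏ i : Fin n, ∏ j : Fin n,
        (if (i : ℕ) < (j : ℕ) then ((a j : ℚ) - (a i : ℚ)) else 1))
      = (Matrix.vandermonde (fun i : Fin n => ((a i : ℚ)))).det := by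
    rw [Matrix.det_vandermonde]
    exact Finset.prod_congr rfl fun i _ => prod_ite_lt n (fun i j => (a j : ℚ) - (a i : ℚ)) i
  -- the polynomials
  set p : Fin n → ℚ[X] := fun j => ∏ m ∈ Finset.range (j : ℕ), (X - C (m : ℚ)) with hp
  have hmonic : ∀ j, (p j).Monic := fun j =>
    monic_prod_of_monic _ _ fun m _ => monic_X_sub_C _
  have hdeg : ∀ j : Fin n, (p j).natDegree = (j : ℕ) := by
    intro j
    rw [hp]
    rw [Polynomial.natDegree_prod _ _ (fun m _ => X_sub_C_ne_zero _)]
    simp only [Polynomial.natDegree_X_sub_C]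
    simp
  have heval : ∀ (i j : Fin n), (p j).eval ((a i : ℚ))
      = ∏ m ∈ Finset.range (j : ℕ), ((a i : ℚ) - (m : ℚ)) := by
    intro i j
    rw [hp, eval_prod]
    exact Finset.prod_congr rfl fun m _ => by simp
  -- det of the choose matrix
  have hdet : Matrix.det (Matrix.of fun i j : Fin n => intChoose (a i) (j : ℕ))
      = (Matrix.vandermonde (fun i : Fin n => ((a i : ℚ)))).det
        / (∏ j : Fin n, ((j : ℕ).factorial : ℚ)) := by
    set B : Matrix (Fin n) (Fin n) ℚ := Matrix.of (fun i j : Fin n => (p j).eval ((a i : ℚ)))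
      with hB
    have key : (Matrix.of fun i j : Fin n => intChoose (a i) (j : ℕ))
        = Matrix.of (fun i j : Fin n => (((j : ℕ).factorial : ℚ))⁻¹ * B i j) := by
      ext i j
      rw [Matrix.of_apply, Matrix.of_apply, hB, Matrix.of_apply, intChoose, heval,
        div_eq_inv_mul]
    rw [key, Matrix.det_mul_row (fun j : Fin n => (((j : ℕ).factorial : ℚ))⁻¹) B]
    rw [hB]
    rw [← Matrix.det_eval_matrixOfPolynomials_eq_det_vandermonde _ p hdeg hmonic]
    rw [Finset.prod_inv_distrib, div_eq_inv_mul]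
  have hfacne : (∏ j : Fin n, ((j : ℕ).factorial : ℚ)) ≠ 0 :=
    Finset.prod_ne_zero_iff.mpr fun j _ => Nat.cast_ne_zero.mpr (Nat.factorial_ne_zero _)
  have main : (∏ i : Fin n, ∏ j : Fin n,
        (if (i : ℕ) < (j : ℕ) then ((a j : ℚ) - (a i : ℚ)) / ((j : ℚ) - (i : ℚ)) else 1))
      = Matrix.det (Matrix.of fun i j : Fin n => intChoose (a i) (j : ℕ)) := by
    rw [hsplit, hnum, prod_ite_fact, hdet]
  refine ⟨main, ?_⟩
  refine ⟨(Matrix.of fun i j : Fin n => Ring.choose (a i) (j : ℕ)).det, ?_⟩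
  rw [main]
  have : (Matrix.of fun i j : Fin n => intChoose (a i) (j : ℕ))
      = (Int.castRingHom ℚ).mapMatrix (Matrix.of fun i j : Fin n => Ring.choose (a i) (j : ℕ)) := by
    ext i j
    simp [intChoose_eq_cast]
  rw [this, ← RingHom.map_det]
  simp
end

section
/- Define V on real tuples by V(x) = 1 and V(x₁,...,xₙ) = ∫_{x₁}^{x₂} ∫_{x₂}^{x₃} ··· ∫_{x_{n−1}}^{xₙ} V(y₁,...,y_{n−1}) dy_{n−1}···dy₁. Then V(x₁,...,xₙ) = ∏_{1≤i<j≤n} (x_j − x_i)/(j − i). -/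
open intervalIntegral

/-- The nested oriented integral
`∫_{x₁}^{x₂} ∫_{x₂}^{x₃} ⋯ ∫_{x_m}^{x_{m+1}} f(y₁,…,y_m) dy_m ⋯ dy₁`,
defined by integrating out the innermost variable first. -/
noncomputable def nestedIntegral : (m : ℕ) → (Fin (m + 1) → ℝ) → ((Fin m → ℝ) → ℝ) → ℝ
  | 0, _, f => f (fun i => i.elim0)
  | m + 1, x, f =>
    nestedIntegral m (fun i => x i.castSucc)
      (fun y => ∫ t in (x ((Fin.last m).castSucc))..(x (Fin.last (m + 1))),
        f (Fin.snoc y t))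

/-- The function `V` on real tuples: `V(x₁) = 1` and
`V(x₁,…,xₙ) = ∫_{x₁}^{x₂} ∫_{x₂}^{x₃} ⋯ ∫_{x_{n−1}}^{xₙ} V(y₁,…,y_{n−1}) dy_{n−1}⋯dy₁`,
with all integrals oriented.  Here `V n` takes tuples of length `n+1`. -/
noncomputable def V : (n : ℕ) → (Fin (n + 1) → ℝ) → ℝ
  | 0, _ => 1
  | n + 1, x => nestedIntegral (n + 1) x (fun y => V n y)

/- ### Auxiliary lemmas -/

private lemma aux_prod_factorial (m : ℕ) :
    (∏ i ∈ Finset.range m, ((m : ℝ) - (i : ℝ))) = (Nat.factorial m : ℝ) := by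
  have h := Finset.prod_range_reflect (fun j => ((j : ℝ) + 1)) m
  have h2 : ∀ j ∈ Finset.range m, ((m : ℝ) - j) = ((m - 1 - j : ℕ) : ℝ) + 1 := by
    intro j hj
    rw [Finset.mem_range] at hj
    have h3 : m - 1 - j + 1 = m - j := by omega
    have h4 : ((m - j : ℕ) : ℝ) = (m : ℝ) - j := by
      push_cast [Nat.cast_sub hj.le]; ring
    rw [← h4, ← h3]; push_cast; ring
  rw [Finset.prod_congr rfl h2, h]
  clear h h2
  induction m with
  | zero => simp
  | succ k ih =>
      rw [Finset.prod_range_succ, ih, Nat.factorial_succ]; push_cast; ring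

/-- `∏_{i<j} (j-i) = j!` for the double product over `Fin N`. -/
private lemma aux_denominator (N : ℕ) :
    (∏ i : Fin N, ∏ j : Fin N,
        (if (i : ℕ) < (j : ℕ) then ((j : ℝ) - (i : ℝ)) else 1))
      = ∏ j : Fin N, (Nat.factorial j : ℝ) := by
  rw [Finset.prod_comm]
  refine Finset.prod_congr rfl fun j _ => ?_
  rw [Fin.prod_univ_eq_prod_range (fun i => if i < (j : ℕ) then ((j : ℝ) - (i : ℝ)) else 1) N]
  rw [← Finset.prod_filter]
  have hs : (Finset.range N).filter (fun i => i < (j : ℕ)) = Finset.range (j : ℕ) := by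
    ext k; simp only [Finset.mem_filter, Finset.mem_range]
    exact ⟨fun h => h.2, fun h => ⟨lt_trans h j.isLt, h⟩⟩
  rw [hs, aux_prod_factorial]

/-- The determinant of the matrix `x_i^j / j!` equals the claimed product. -/
private lemma det_vmat (N : ℕ) (x : Fin N → ℝ) :
    (Matrix.of fun i j : Fin N => x i ^ (j : ℕ) / (Nat.factorial j : ℝ)).det
      = ∏ i : Fin N, ∏ j : Fin N,
          (if (i : ℕ) < (j : ℕ) then (x j - x i) / ((j : ℝ) - (i : ℝ)) else 1) := by
  have hM : (Matrix.of fun i j : Fin N => x i ^ (j : ℕ) / (Nat.factorial j : ℝ))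
      = Matrix.of fun i j : Fin N =>
          (fun j : Fin N => ((Nat.factorial j : ℝ))⁻¹) j * (Matrix.vandermonde x) i j := by
    ext i j
    rw [Matrix.of_apply, Matrix.of_apply, Matrix.vandermonde_apply, div_eq_inv_mul]
  rw [hM, Matrix.det_mul_row, Matrix.det_vandermonde]
  have hnum : ∀ i : Fin N, (∏ j ∈ Finset.Ioi i, (x j - x i))
      = ∏ j : Fin N, (if (i : ℕ) < (j : ℕ) then (x j - x i) else 1) := by
    intro i
    rw [← Finset.prod_filter]
    congr 1
    ext k
    simp only [Finset.mem_Ioi, Finset.mem_filter, Finset.mem_univ, true_and, Fin.lt_def]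
  have hterm : ∀ i j : Fin N, (if (i : ℕ) < (j : ℕ) then (x j - x i) / ((j : ℝ) - (i : ℝ)) else 1)
      = (if (i : ℕ) < (j : ℕ) then (x j - x i) else 1)
        * (if (i : ℕ) < (j : ℕ) then ((j : ℝ) - (i : ℝ)) else 1)⁻¹ := by
    intro i j; split
    · exact div_eq_mul_inv _ _
    · simp
  simp_rw [hterm, Finset.prod_mul_distrib, Finset.prod_inv_distrib]
  rw [aux_denominator]
  rw [Finset.prod_congr rfl fun i _ => hnum i]
  ring

/-- Nested integrals of finite sums of products of one-variable continuous
functions factor completely. -/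
private lemma nestedIntegral_sum_prod {S : Type} [Fintype S] :
    ∀ (m : ℕ) (x : Fin (m + 1) → ℝ) (c : S → ℝ) (g : S → Fin m → ℝ → ℝ),
      (∀ s i, Continuous (g s i)) →
      nestedIntegral m x (fun y => ∑ s : S, c s * ∏ i : Fin m, g s i (y i))
        = ∑ s : S, c s * ∏ i : Fin m, ∫ t in (x i.castSucc)..(x i.succ), g s i t := by
  intro m
  induction m with
  | zero =>
      intro x c g hg
      simp [nestedIntegral]
  | succ m ih =>
      intro x c g hg
      simp only [nestedIntegral]
      have hfun : (fun y : Fin m → ℝ =>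
            ∫ t in (x ((Fin.last m).castSucc))..(x (Fin.last (m + 1))),
              ∑ s : S, c s * ∏ i : Fin (m + 1), g s i ((Fin.snoc y t : Fin (m + 1) → ℝ) i))
          = fun y : Fin m → ℝ => ∑ s : S,
              (c s * ∫ t in (x ((Fin.last m).castSucc))..(x (Fin.last (m + 1))),
                  g s (Fin.last m) t)
                * ∏ i : Fin m, g s i.castSucc (y i) := by
        funext y
        have heq : ∀ t : ℝ, (∑ s : S, c s * ∏ i : Fin (m + 1), g s i ((Fin.snoc y t : Fin (m + 1) → ℝ) i))
            = ∑ s : S, (c s * ∏ i : Fin m, g s i.castSucc (y i)) * g s (Fin.last m) t := by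
          intro t
          refine Finset.sum_congr rfl fun s _ => ?_
          rw [Fin.prod_univ_castSucc]
          simp only [Fin.snoc_castSucc, Fin.snoc_last]
          ring
        have hint : (∫ t in (x ((Fin.last m).castSucc))..(x (Fin.last (m + 1))),
              ∑ s : S, c s * ∏ i : Fin (m + 1), g s i ((Fin.snoc y t : Fin (m + 1) → ℝ) i))
            = ∫ t in (x ((Fin.last m).castSucc))..(x (Fin.last (m + 1))),
              ∑ s : S, (c s * ∏ i : Fin m, g s i.castSucc (y i)) * g s (Fin.last m) t :=
          intervalIntegral.integral_congr (fun t _ => heq t)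
        rw [hint]
        have hInt : ∀ s ∈ (Finset.univ : Finset S), IntervalIntegrable
            (fun t => (c s * ∏ i : Fin m, g s i.castSucc (y i)) * g s (Fin.last m) t)
            MeasureTheory.volume (x ((Fin.last m).castSucc)) (x (Fin.last (m + 1))) := by
          intro s _
          exact (continuous_const.mul (hg s (Fin.last m))).intervalIntegrable _ _
        rw [intervalIntegral.integral_finset_sum hInt]
        refine Finset.sum_congr rfl fun s _ => ?_
        rw [intervalIntegral.integral_const_mul]
        ring
      rw [hfun, ih (fun i => x i.castSucc)
            (fun s => c s * ∫ t in (x ((Fin.last m).castSucc))..(x (Fin.last (m + 1))),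
                g s (Fin.last m) t)
            (fun s i => g s i.castSucc) (fun s i => hg s i.castSucc)]
      refine Finset.sum_congr rfl fun s _ => ?_
      rw [Fin.prod_univ_castSucc]
      have hb : ∀ i : Fin m, ((fun i : Fin (m + 1) => x i.castSucc) i.succ : ℝ)
          = x i.castSucc.succ := by
        intro i; rw [Fin.succ_castSucc]
      have hlast : x (Fin.last (m + 1)) = x (Fin.last m).succ := by
        rw [Fin.succ_last]
      rw [hlast]
      have hprod : (∏ i : Fin m,
            ∫ t in ((fun i : Fin (m + 1) => x i.castSucc) i.castSucc)..((fun i : Fin (m + 1) => x i.castSucc) i.succ),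
              g s i.castSucc t)
          = ∏ i : Fin m, ∫ t in (x i.castSucc.castSucc)..(x i.castSucc.succ), g s i.castSucc t := by
        refine Finset.prod_congr rfl fun i _ => ?_
        rw [show ((fun i : Fin (m + 1) => x i.castSucc) i.succ) = x i.castSucc.succ from hb i]
      rw [hprod]
      ring

private lemma integral_pow_div (a b : ℝ) (j : ℕ) :
    (∫ t in a..b, t ^ j / (Nat.factorial j : ℝ))
      = b ^ (j + 1) / (Nat.factorial (j + 1) : ℝ)
        - a ^ (j + 1) / (Nat.factorial (j + 1) : ℝ) := by
  rw [intervalIntegral.integral_div, integral_pow, Nat.factorial_succ]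
  have h1 : (Nat.factorial j : ℝ) ≠ 0 := Nat.cast_ne_zero.2 (Nat.factorial_ne_zero j)
  have h2 : ((j : ℝ) + 1) ≠ 0 := by positivity
  push_cast
  field_simp

/-- `V` equals the determinant of the matrix `x_i ^ j / j!`. -/
private lemma V_eq_det : ∀ (n : ℕ) (x : Fin (n + 1) → ℝ),
    V n x = (Matrix.of fun i j : Fin (n + 1) => x i ^ (j : ℕ) / (Nat.factorial j : ℝ)).det := by
  intro n
  induction n with
  | zero =>
      intro x
      rw [show V 0 x = 1 from rfl, Matrix.det_fin_one]
      simp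
  | succ n ih =>
      intro x
      rw [show V (n + 1) x = nestedIntegral (n + 1) x (fun y => V n y) from rfl]
      have h1 : (fun y : Fin (n + 1) → ℝ => V n y)
          = fun y : Fin (n + 1) → ℝ => ∑ σ : Equiv.Perm (Fin (n + 1)),
              ((Equiv.Perm.sign σ : ℤ) : ℝ)
                * ∏ i : Fin (n + 1), (fun (i : Fin (n + 1)) (t : ℝ) =>
                    t ^ ((σ i : ℕ)) / (Nat.factorial (σ i) : ℝ)) i (y i) := by
        funext y
        rw [ih y, ← Matrix.det_transpose, Matrix.det_apply']
        refine Finset.sum_congr rfl fun σ _ => ?_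
        simp [Matrix.transpose_apply]
      rw [h1, nestedIntegral_sum_prod (n + 1) x _ _
        (fun σ i => Continuous.div_const (continuous_pow _) _)]
      -- evaluate the integrals
      have h2 : ∀ σ : Equiv.Perm (Fin (n + 1)), ∀ i : Fin (n + 1),
          (∫ t in (x i.castSucc)..(x i.succ), t ^ ((σ i : ℕ)) / (Nat.factorial (σ i) : ℝ))
            = x i.succ ^ ((σ i : ℕ) + 1) / (Nat.factorial ((σ i : ℕ) + 1) : ℝ)
              - x i.castSucc ^ ((σ i : ℕ) + 1) / (Nat.factorial ((σ i : ℕ) + 1) : ℝ) :=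
        fun σ i => integral_pow_div _ _ _
      -- the matrix of integrated entries
      set A : Matrix (Fin (n + 1)) (Fin (n + 1)) ℝ :=
        Matrix.of fun i j : Fin (n + 1) =>
          x i.succ ^ ((j : ℕ) + 1) / (Nat.factorial ((j : ℕ) + 1) : ℝ)
            - x i.castSucc ^ ((j : ℕ) + 1) / (Nat.factorial ((j : ℕ) + 1) : ℝ) with hA
      have h3 : (∑ σ : Equiv.Perm (Fin (n + 1)),
            ((Equiv.Perm.sign σ : ℤ) : ℝ)
              * ∏ i : Fin (n + 1),
                  ∫ t in (x i.castSucc)..(x i.succ), t ^ ((σ i : ℕ)) / (Nat.factorial (σ i) : ℝ))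
          = A.transpose.det := by
        rw [Matrix.det_apply']
        refine Finset.sum_congr rfl fun σ _ => ?_
        rw [Finset.prod_congr rfl fun i _ => h2 σ i]
        simp [hA, Matrix.transpose_apply]
      rw [h3, Matrix.det_transpose]
      -- now row-reduction: det A = det of the big matrix
      set B : Matrix (Fin (n + 2)) (Fin (n + 2)) ℝ :=
        Matrix.of fun i j : Fin (n + 2) => x i ^ (j : ℕ) / (Nat.factorial j : ℝ) with hB
      set R : Matrix (Fin (n + 2)) (Fin (n + 2)) ℝ :=
        Matrix.of fun i j : Fin (n + 2) =>
          Fin.cases (B 0 j) (fun i' : Fin (n + 1) => B i'.succ j - B i'.castSucc j) i with hR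
      have hBR : B.det = R.det := by
        refine Matrix.det_eq_of_forall_row_eq_smul_add_pred (fun _ => 1) ?_ ?_
        · intro j; simp [hR]
        · intro i j
          show B i.succ j = R i.succ j + 1 * B i.castSucc j
          simp [hR]
      have hR0 : ∀ i' : Fin (n + 1), R i'.succ 0 = 0 := by
        intro i'
        simp [hR, hB]
      have hRdet : R.det = (R.submatrix Fin.succ Fin.succ).det := by
        rw [Matrix.det_succ_column_zero, Fin.sum_univ_succ]
        have hz : ∀ i' : Fin (n + 1),
            (-1 : ℝ) ^ ((i'.succ : ℕ)) * R i'.succ 0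
                * (R.submatrix i'.succ.succAbove Fin.succ).det = 0 := by
          intro i'; rw [hR0 i']; ring
        rw [Finset.sum_congr rfl fun i' _ => hz i', Finset.sum_const_zero, add_zero]
        have h00 : R 0 0 = 1 := by simp [hR, hB]
        rw [h00]
        simp [Fin.succAbove_zero]
      have hsub : R.submatrix Fin.succ Fin.succ = A := by
        ext i j
        simp only [Matrix.submatrix_apply]
        show R i.succ j.succ = A i j
        simp only [hR, hB, hA, Matrix.of_apply, Fin.cases_succ, Fin.val_succ]
      rw [← hsub, ← hRdet, ← hBR]

/-- `V(x₁,…,xₙ) = ∏_{1≤i<j≤n} (x_j − x_i)/(j − i)`. -/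
theorem V_eq_prod (n : ℕ) (x : Fin (n + 1) → ℝ) :
    V n x = ∏ i : Fin (n + 1), ∏ j : Fin (n + 1),
      (if (i : ℕ) < (j : ℕ) then (x j - x i) / ((j : ℝ) - (i : ℝ)) else 1) := by
  rw [V_eq_det n x, det_vmat (n + 1) x]
end

section
/- Let x₁ < x₂ < ... < xₙ be real numbers, set X_{i,i} = x_i, and for 1 ≤ i < j ≤ n let X_{i,j} be independent uniform random variables on [x_i, x_j]. Then the probability that X_{i,j} ≤ X_{i+1,j} and X_{i,j} ≤ X_{i,j+1} for all valid i,j equals 1/(1!·2!···(n−1)!). -/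
open MeasureTheory

/-- The uniform probability measure on the interval `[a, b]`. -/
noncomputable def uniformOnIcc (a b : ℝ) : Measure ℝ :=
  (ENNReal.ofReal (b - a))⁻¹ • (volume.restrict (Set.Icc a b))

/-- The index set of the random entries: pairs `(i,j)` with `i < j`. -/
abbrev StrictPairs (n : ℕ) := {p : Fin n × Fin n // p.1 < p.2}

/-- The full triangular array: `X_{i,i} = x_i` (deterministic), and for `i < j`,
`X_{i,j}` is the random coordinate `ω (i,j)`. -/
def arrayVal {n : ℕ} (x : Fin n → ℝ) (ω : StrictPairs n → ℝ) (i j : Fin n) : ℝ :=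
  if h : i < j then ω ⟨(i, j), h⟩ else x i

open Finset

/-! ### auxiliary lemmas -/

theorem prod_strictPairs (k : ℕ) (f : Fin k → Fin k → ℝ) :
    ∏ p : StrictPairs k, f p.1.1 p.1.2 = ∏ i, ∏ j ∈ Finset.Ioi i, f i j := by
  rw [← Finset.prod_subtype (Finset.univ.filter fun p : Fin k × Fin k => p.1 < p.2)
    (by simp) (fun p => f p.1 p.2), Finset.prod_filter, ← Finset.univ_product_univ,
    Finset.prod_product]
  refine Finset.prod_congr rfl fun i _ => ?_
  rw [← Finset.prod_filter (fun j => i < j) (f i)]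
  congr 1
  ext j
  simp

/-- The GT event set. -/
def GTset (m : ℕ) (x : Fin m → ℝ) : Set (StrictPairs m → ℝ) :=
  {ω : StrictPairs m → ℝ |
    (∀ (i j : Fin m) (h : (i : ℕ) + 1 ≤ (j : ℕ)),
      arrayVal x ω i j ≤ arrayVal x ω ⟨(i : ℕ) + 1, lt_of_le_of_lt h j.2⟩ j) ∧
    (∀ (i j : Fin m) (hij : (i : ℕ) ≤ (j : ℕ)) (h : (j : ℕ) + 1 < m),
      arrayVal x ω i j ≤ arrayVal x ω i ⟨(j : ℕ) + 1, h⟩)}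

theorem measurable_arrayVal {m : ℕ} (x : Fin m → ℝ) (i j : Fin m) :
    Measurable fun ω : StrictPairs m → ℝ => arrayVal x ω i j := by
  by_cases h : i < j
  · simpa [arrayVal, h] using measurable_pi_apply (⟨(i, j), h⟩ : StrictPairs m)
  · simpa [arrayVal, h] using measurable_const

theorem measurableSet_GTset (m : ℕ) (x : Fin m → ℝ) : MeasurableSet (GTset m x) := by
  have : GTset m x =
      (⋂ (i : Fin m), ⋂ (j : Fin m), ⋂ (h : (i : ℕ) + 1 ≤ (j : ℕ)),
        {ω : StrictPairs m → ℝ |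
          arrayVal x ω i j ≤ arrayVal x ω ⟨(i : ℕ) + 1, lt_of_le_of_lt h j.2⟩ j}) ∩
      (⋂ (i : Fin m), ⋂ (j : Fin m), ⋂ (_ : (i : ℕ) ≤ (j : ℕ)), ⋂ (h : (j : ℕ) + 1 < m),
        {ω : StrictPairs m → ℝ | arrayVal x ω i j ≤ arrayVal x ω i ⟨(j : ℕ) + 1, h⟩}) := by
    ext ω
    simp only [GTset, Set.mem_setOf_eq, Set.mem_inter_iff, Set.mem_iInter]
  rw [this]
  refine MeasurableSet.inter ?_ ?_
  · exact .iInter fun i => .iInter fun j => .iInter fun h =>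
      measurableSet_le (measurable_arrayVal _ _ _) (measurable_arrayVal _ _ _)
  · exact .iInter fun i => .iInter fun j => .iInter fun hij => .iInter fun h =>
      measurableSet_le (measurable_arrayVal _ _ _) (measurable_arrayVal _ _ _)

def pairFun (k : ℕ) : Fin k ⊕ StrictPairs k → StrictPairs (k+1)
  | .inl i => ⟨(i.castSucc, i.succ), by simp [Fin.lt_def]⟩
  | .inr p => ⟨(p.1.1.castSucc, p.1.2.succ), by
      have := p.2; simp only [Fin.lt_def] at this ⊢
      simp only [Fin.coe_castSucc, Fin.val_succ]; omega⟩

theorem pairFun_bijective (k : ℕ) : Function.Bijective (pairFun k) := by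
  constructor
  · rintro (a | ⟨⟨a, b⟩, hab⟩) (c | ⟨⟨c, d⟩, hcd⟩) h <;>
      simp only [pairFun, Subtype.mk.injEq, Prod.mk.injEq] at h
    · simp only [Sum.inl.injEq]
      exact Fin.castSucc_injective _ h.1
    · exfalso
      have h1 : (a : ℕ) = (c : ℕ) := by simpa using congrArg Fin.val h.1
      have h2 : (a : ℕ) + 1 = (d : ℕ) + 1 := by simpa using congrArg Fin.val h.2
      have := hcd
      simp only [Fin.lt_def] at this
      omega
    · exfalso
      have h1 : (a : ℕ) = (c : ℕ) := by simpa using congrArg Fin.val h.1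
      have h2 : (b : ℕ) + 1 = (c : ℕ) + 1 := by simpa using congrArg Fin.val h.2
      have := hab
      simp only [Fin.lt_def] at this
      omega
    · simp only [Sum.inr.injEq, Subtype.mk.injEq, Prod.mk.injEq]
      exact ⟨Fin.castSucc_injective _ h.1, Fin.succ_injective _ h.2⟩
  · rintro ⟨⟨i, j⟩, hij⟩
    have hij' : (i : ℕ) < (j : ℕ) := hij
    have hj2 := j.2
    have hik : (i : ℕ) < k := by omega
    by_cases hgap : (i : ℕ) + 1 < (j : ℕ)
    · refine ⟨Sum.inr ⟨(⟨i, hik⟩, ⟨(j : ℕ) - 1, by omega⟩), by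
        simp only [Fin.lt_def]; omega⟩, ?_⟩
      apply Subtype.ext
      simp only [pairFun, Prod.mk.injEq]
      constructor <;> apply Fin.ext <;>
        simp only [Fin.coe_castSucc, Fin.val_succ] <;> omega
    · refine ⟨Sum.inl ⟨i, hik⟩, ?_⟩
      apply Subtype.ext
      simp only [pairFun, Prod.mk.injEq]
      constructor <;> apply Fin.ext <;>
        simp only [Fin.coe_castSucc, Fin.val_succ] <;> omega

/-- The reindexing equivalence: gap-one pairs plus shifted pairs. -/
noncomputable def pairEquiv (k : ℕ) : (Fin k ⊕ StrictPairs k) ≃ StrictPairs (k+1) :=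
  Equiv.ofBijective (pairFun k) (pairFun_bijective k)

theorem pairEquiv_inl (k : ℕ) (i : Fin k) :
    pairEquiv k (Sum.inl i) = ⟨(i.castSucc, i.succ), by simp [Fin.lt_def]⟩ := rfl

theorem pairEquiv_inr (k : ℕ) (p : StrictPairs k) :
    pairEquiv k (Sum.inr p) = ⟨(p.1.1.castSucc, p.1.2.succ), by
      have := p.2; simp only [Fin.lt_def] at this ⊢
      simp only [Fin.coe_castSucc, Fin.val_succ]; omega⟩ := rfl

theorem arrayVal_of_lt {n : ℕ} (x : Fin n → ℝ) (ω : StrictPairs n → ℝ) {i j : Fin n}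
    (h : i < j) : arrayVal x ω i j = ω ⟨(i, j), h⟩ := dif_pos h

theorem arrayVal_of_not_lt {n : ℕ} (x : Fin n → ℝ) (ω : StrictPairs n → ℝ) {i j : Fin n}
    (h : ¬ i < j) : arrayVal x ω i j = x i := dif_neg h

theorem spair_eq {n : ℕ} {i j i' j' : Fin n} (h : i < j) (h' : i' < j')
    (hi : (i : ℕ) = (i' : ℕ)) (hj : (j : ℕ) = (j' : ℕ)) :
    (⟨(i, j), h⟩ : StrictPairs n) = ⟨(i', j'), h'⟩ := by
  apply Subtype.ext
  simp only [Prod.mk.injEq]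
  exact ⟨Fin.ext hi, Fin.ext hj⟩

theorem arrayVal_pair {k : ℕ} (x : Fin (k+1) → ℝ) (y : Fin k → ℝ) (z : StrictPairs k → ℝ)
    (ω : StrictPairs (k+1) → ℝ)
    (hω1 : ∀ i : Fin k, ω (pairEquiv k (Sum.inl i)) = y i)
    (hω2 : ∀ q : StrictPairs k, ω (pairEquiv k (Sum.inr q)) = z q)
    (a b : Fin k) (hab : a ≤ b) (i j : Fin (k+1))
    (hi : (i : ℕ) = (a : ℕ)) (hj : (j : ℕ) = (b : ℕ) + 1) :
    arrayVal x ω i j = arrayVal y z a b := by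
  have hab' : (a : ℕ) ≤ (b : ℕ) := hab
  have hij : i < j := by rw [Fin.lt_def]; omega
  rw [arrayVal_of_lt x ω hij]
  rcases lt_or_eq_of_le hab with hlt | heq
  · rw [arrayVal_of_lt y z hlt]
    have : (⟨(i, j), hij⟩ : StrictPairs (k+1)) = pairEquiv k (Sum.inr ⟨(a, b), hlt⟩) := by
      rw [pairEquiv_inr]
      exact spair_eq _ _ (by simpa using hi) (by simpa using hj)
    rw [this, hω2]
  · subst heq
    rw [arrayVal_of_not_lt y z (lt_irrefl a)]
    have : (⟨(i, j), hij⟩ : StrictPairs (k+1)) = pairEquiv k (Sum.inl a) := by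
      rw [pairEquiv_inl]
      exact spair_eq _ _ (by simpa using hi) (by simpa using hj)
    rw [this, hω1]

theorem mem_GTset_succ_iff {k : ℕ} (x : Fin (k+1) → ℝ) (y : Fin k → ℝ)
    (z : StrictPairs k → ℝ) (ω : StrictPairs (k+1) → ℝ)
    (hω1 : ∀ i : Fin k, ω (pairEquiv k (Sum.inl i)) = y i)
    (hω2 : ∀ q : StrictPairs k, ω (pairEquiv k (Sum.inr q)) = z q) :
    ω ∈ GTset (k+1) x ↔
      (∀ i : Fin k, x i.castSucc ≤ y i ∧ y i ≤ x i.succ) ∧ z ∈ GTset k y := by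
  have hval := arrayVal_pair x y z ω hω1 hω2
  constructor
  · rintro ⟨h1, h2⟩
    refine ⟨fun a => ⟨?_, ?_⟩, ?_, ?_⟩
    · -- x a.castSucc ≤ y a
      have H := h2 a.castSucc a.castSucc (le_refl _)
        (by simp only [Fin.coe_castSucc]; omega)
      rwa [arrayVal_of_not_lt x ω (lt_irrefl _),
        hval a a (le_refl a) a.castSucc _ (by simp) (by simp),
        arrayVal_of_not_lt y z (lt_irrefl _)] at H
    · -- y a ≤ x a.succ
      have H := h1 a.castSucc a.succ (by simp)
      rwa [hval a a (le_refl a) a.castSucc a.succ (by simp) (by simp),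
        arrayVal_of_not_lt y z (lt_irrefl _),
        arrayVal_of_not_lt x ω (by rw [Fin.lt_def]; simp),
        show (⟨(a.castSucc : ℕ)+1, lt_of_le_of_lt (by simp) a.succ.2⟩ : Fin (k+1))
          = a.succ from Fin.ext (by simp)] at H
    · -- first family for z
      intro a b hab
      have hbk := b.2
      have H := h1 a.castSucc b.succ (by simp only [Fin.coe_castSucc, Fin.val_succ]; omega)
      have e1 : arrayVal x ω a.castSucc b.succ = arrayVal y z a b :=
        hval a b (by rw [Fin.le_def]; omega) _ _ (by simp) (by simp)
      have e2 : arrayVal x ω ⟨(a.castSucc : ℕ)+1,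
            lt_of_le_of_lt (by simp only [Fin.coe_castSucc, Fin.val_succ]; omega) b.succ.2⟩ b.succ
          = arrayVal y z ⟨(a : ℕ)+1, lt_of_le_of_lt hab b.2⟩ b :=
        hval ⟨(a : ℕ)+1, lt_of_le_of_lt hab b.2⟩ b (by rw [Fin.le_def]; exact hab) _ _
          (by simp) (by simp)
      rwa [e1, e2] at H
    · -- second family for z
      intro a b hab hb
      have H := h2 a.castSucc b.succ
        (by simp only [Fin.coe_castSucc, Fin.val_succ]; omega)
        (by simp only [Fin.val_succ]; omega)
      have e1 : arrayVal x ω a.castSucc b.succ = arrayVal y z a b :=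
        hval a b (by rw [Fin.le_def]; exact hab) _ _ (by simp) (by simp)
      have e2 : arrayVal x ω a.castSucc ⟨(b.succ : ℕ)+1, by simp only [Fin.val_succ]; omega⟩
          = arrayVal y z a ⟨(b : ℕ)+1, hb⟩ :=
        hval a ⟨(b : ℕ)+1, hb⟩ (by rw [Fin.le_def]; simp; omega) _ _ (by simp) (by simp)
      rwa [e1, e2] at H
  · rintro ⟨hbox, hz1, hz2⟩
    constructor
    · -- first family
      intro i j hij
      have hjk := j.2
      have hik : (i : ℕ) < k := by omega
      set a : Fin k := ⟨(i : ℕ), hik⟩ with ha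
      set b : Fin k := ⟨(j : ℕ) - 1, by omega⟩ with hb
      have hab : a ≤ b := by rw [Fin.le_def]; simp [ha, hb]; omega
      have e1 : arrayVal x ω i j = arrayVal y z a b :=
        hval a b hab i j (by simp [ha]) (by simp [hb]; omega)
      rw [e1]
      by_cases hcase : (i : ℕ) + 1 < (j : ℕ)
      · -- strict: use hz1
        have hab' : (a : ℕ) + 1 ≤ (b : ℕ) := by simp [ha, hb]; omega
        have e2 : arrayVal x ω ⟨(i : ℕ)+1, lt_of_le_of_lt hij j.2⟩ j
            = arrayVal y z ⟨(a : ℕ)+1, lt_of_le_of_lt hab' b.2⟩ b :=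
          hval _ b (by rw [Fin.le_def]; exact hab') _ _ (by simp [ha]) (by simp [hb]; omega)
        rw [e2]
        exact hz1 a b hab'
      · -- i+1 = j : right side is diagonal
        have hj1 : (i : ℕ) + 1 = (j : ℕ) := by omega
        have hab2 : (a : ℕ) = (b : ℕ) := by simp [ha, hb]; omega
        have heqab : a = b := Fin.ext hab2
        have e3 : arrayVal x ω ⟨(i : ℕ)+1, lt_of_le_of_lt hij j.2⟩ j
            = x ⟨(i : ℕ)+1, lt_of_le_of_lt hij j.2⟩ :=
          arrayVal_of_not_lt x ω (by rw [Fin.lt_def]; simp; omega)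
        rw [e3, heqab, arrayVal_of_not_lt y z (lt_irrefl _)]
        have := (hbox b).2
        have e4 : x b.succ = x ⟨(i : ℕ)+1, lt_of_le_of_lt hij j.2⟩ :=
          congrArg x (Fin.ext (by simp [hb]; omega))
        rw [← e4]
        exact this
    · -- second family
      intro i j hij hj
      have hjk : (j : ℕ) < k := by omega
      have hik : (i : ℕ) < k := by omega
      set a : Fin k := ⟨(i : ℕ), hik⟩ with ha
      set c : Fin k := ⟨(j : ℕ), hjk⟩ with hc
      have e2 : arrayVal x ω i ⟨(j : ℕ)+1, hj⟩ = arrayVal y z a c :=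
        hval a c (by rw [Fin.le_def]; simpa [ha, hc]) _ _ (by simp [ha]) (by simp [hc])
      rw [e2]
      by_cases hcase : (i : ℕ) < (j : ℕ)
      · -- use hz2 with b := j - 1
        set b : Fin k := ⟨(j : ℕ) - 1, by omega⟩ with hb
        have e1 : arrayVal x ω i j = arrayVal y z a b :=
          hval a b (by rw [Fin.le_def]; simp [ha, hb]; omega) _ _ (by simp [ha])
            (by simp [hb]; omega)
        rw [e1]
        have H := hz2 a b (by simp [ha, hb]; omega) (by simp [hb]; omega)
        have : (⟨(b : ℕ)+1, by simp [hb]; omega⟩ : Fin k) = c := Fin.ext (by simp [hb, hc]; omega)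
        rwa [this] at H
      · -- i = j : left side diagonal
        have hij2 : (i : ℕ) = (j : ℕ) := by omega
        rw [arrayVal_of_not_lt x ω (by rw [Fin.lt_def]; omega)]
        have heqac : a = c := Fin.ext (by simp [ha, hc]; omega)
        rw [← heqac, arrayVal_of_not_lt y z (lt_irrefl _)]
        have := (hbox a).1
        have e5 : x a.castSucc = x i := congrArg x (Fin.ext (by simp [ha]))
        rwa [e5] at this

theorem GTset_subset_box {m : ℕ} (x : Fin m → ℝ) {ω : StrictPairs m → ℝ}
    (hω : ω ∈ GTset m x) (p : StrictPairs m) :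
    ω p ∈ Set.Icc (x p.1.1) (x p.1.2) := by
  obtain ⟨h1, h2⟩ := hω
  have lower : ∀ (d : ℕ) (i j : Fin m), (j : ℕ) = (i : ℕ) + d → x i ≤ arrayVal x ω i j := by
    intro d
    induction d with
    | zero =>
      intro i j hj
      have : ¬ i < j := by rw [Fin.lt_def]; omega
      rw [arrayVal_of_not_lt x ω this]
    | succ d ih =>
      intro i j hj
      have hjm := j.2
      have hj' : (i : ℕ) + d < m := by omega
      set j' : Fin m := ⟨(i : ℕ) + d, hj'⟩ with hjd
      have H := h2 i j' (by simp [hjd]) (by simp [hjd]; omega)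
      have : (⟨(j' : ℕ) + 1, by simp [hjd]; omega⟩ : Fin m) = j := Fin.ext (by simp [hjd]; omega)
      rw [this] at H
      exact le_trans (ih i j' (by simp [hjd])) H
  have upper : ∀ (d : ℕ) (i j : Fin m), (j : ℕ) = (i : ℕ) + d → arrayVal x ω i j ≤ x j := by
    intro d
    induction d with
    | zero =>
      intro i j hj
      have hij : i = j := Fin.ext (by omega)
      subst hij
      rw [arrayVal_of_not_lt x ω (lt_irrefl _)]
    | succ d ih =>
      intro i j hj
      have H := h1 i j (by omega)
      set i' : Fin m := ⟨(i : ℕ) + 1, lt_of_le_of_lt (by omega) j.2⟩ with hi'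
      exact le_trans H (ih i' j (by simp [hi']; omega))
  have hp : p.1.1 < p.1.2 := p.2
  have hv : ω p = arrayVal x ω p.1.1 p.1.2 := by
    rw [arrayVal_of_lt x ω hp]
  rw [hv]
  constructor
  · exact lower ((p.1.2 : ℕ) - (p.1.1 : ℕ)) p.1.1 p.1.2 (by have : (p.1.1:ℕ) < p.1.2 := hp; omega)
  · exact upper ((p.1.2 : ℕ) - (p.1.1 : ℕ)) p.1.1 p.1.2 (by have : (p.1.1:ℕ) < p.1.2 := hp; omega)

theorem integral_pi_prod {k : ℕ} (s : Fin k → Set ℝ) (hs : ∀ i, MeasurableSet (s i))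
    (f : Fin k → ℝ → ℝ) :
    ∫ y in Set.univ.pi s, ∏ i, f i (y i) = ∏ i, ∫ t in s i, f i t := by
  rw [← integral_indicator (MeasurableSet.univ_pi hs)]
  have h : ∀ y : Fin k → ℝ, (Set.univ.pi s).indicator (fun y => ∏ i, f i (y i)) y
      = ∏ i, (s i).indicator (f i) (y i) := by
    intro y
    by_cases hy : y ∈ Set.univ.pi s
    · rw [Set.indicator_of_mem hy]
      exact Finset.prod_congr rfl fun i _ =>
        (Set.indicator_of_mem (hy i (Set.mem_univ i)) _).symm
    · rw [Set.indicator_of_notMem hy]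
      obtain ⟨i, hi⟩ : ∃ i, y i ∉ s i := by simpa [Set.mem_pi] using hy
      exact (Finset.prod_eq_zero (Finset.mem_univ i)
        (Set.indicator_of_notMem hi _)).symm
  simp_rw [h]
  rw [integral_fintype_prod_volume_eq_prod (f := fun i => (s i).indicator (f i))]
  exact Finset.prod_congr rfl fun i _ => integral_indicator (hs i)

theorem det_pow_diff (k : ℕ) (x : Fin (k+1) → ℝ) :
    Matrix.det (Matrix.of fun i j : Fin k =>
        x i.succ ^ ((j:ℕ)+1) - x i.castSucc ^ ((j:ℕ)+1))
      = ∏ i, ∏ j ∈ Finset.Ioi i, (x j - x i) := by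
  classical
  set C : Matrix (Fin (k+1)) (Fin (k+1)) ℝ :=
    Matrix.of fun i j => Fin.cases (x 0 ^ (j:ℕ))
      (fun i' => x i'.succ ^ (j:ℕ) - x i'.castSucc ^ (j:ℕ)) i with hC
  have h1 : Matrix.det (Matrix.vandermonde x) = Matrix.det C := by
    apply Matrix.det_eq_of_forall_row_eq_smul_add_pred (fun _ => (1:ℝ))
    · intro j; simp [hC, Matrix.vandermonde]
    · intro i j; simp [hC, Matrix.vandermonde]
  have hsub : C.submatrix Fin.succ Fin.succ = Matrix.of fun i j : Fin k =>
      x i.succ ^ ((j:ℕ)+1) - x i.castSucc ^ ((j:ℕ)+1) := by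
    ext i j; simp [hC, Matrix.submatrix]
  have h2 : Matrix.det C =
      Matrix.det (Matrix.of fun i j : Fin k =>
        x i.succ ^ ((j:ℕ)+1) - x i.castSucc ^ ((j:ℕ)+1)) := by
    rw [Matrix.det_succ_column_zero, Finset.sum_eq_single 0]
    · have h0 : C 0 0 = 1 := by simp [hC]
      rw [h0, Fin.succAbove_zero, hsub]
      simp
    · intro i _ hi
      obtain ⟨i', rfl⟩ := Fin.exists_succ_eq.mpr hi
      have : C i'.succ 0 = 0 := by simp [hC]
      rw [this]; ring
    · simp
  rw [← h2, ← h1, Matrix.det_vandermonde]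

theorem integral_Icc_pow (a b : ℝ) (h : a ≤ b) (j : ℕ) :
    ∫ t in Set.Icc a b, t ^ j = (b^(j+1) - a^(j+1))/(j+1) := by
  rw [MeasureTheory.integral_Icc_eq_integral_Ioc, ← intervalIntegral.integral_of_le h,
    integral_pow]


theorem integral_box (k : ℕ) (x : Fin (k+1) → ℝ) (hx : Monotone x) :
    ∫ y in Set.univ.pi (fun i : Fin k => Set.Icc (x i.castSucc) (x i.succ)),
      (∏ i, ∏ j ∈ Finset.Ioi i, (y j - y i))
      = (∏ i, ∏ j ∈ Finset.Ioi i, (x j - x i)) / (Nat.factorial k) := by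
  have hvdm : ∀ y : Fin k → ℝ, (∏ i, ∏ j ∈ Finset.Ioi i, (y j - y i))
      = ∑ σ : Equiv.Perm (Fin k), ((Equiv.Perm.sign σ : ℤ) : ℝ)
          * ∏ i, y i ^ ((σ⁻¹ i : Fin k) : ℕ) := by
    intro y
    rw [← Matrix.det_vandermonde, Matrix.det_apply]
    refine Finset.sum_congr rfl fun σ _ => ?_
    rw [← Equiv.prod_comp σ (fun i => y i ^ ((σ⁻¹ i : Fin k) : ℕ))]
    simp [Matrix.vandermonde, Units.smul_def, zsmul_eq_mul]
  simp_rw [hvdm]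
  rw [integral_finset_sum]
  · have key : ∀ σ : Equiv.Perm (Fin k),
        ∫ y in Set.univ.pi (fun i : Fin k => Set.Icc (x i.castSucc) (x i.succ)),
          ((Equiv.Perm.sign σ : ℤ) : ℝ) * ∏ i, y i ^ ((σ⁻¹ i : Fin k) : ℕ)
        = ((Equiv.Perm.sign σ : ℤ) : ℝ) *
            ∏ i, (x i.succ ^ (((σ⁻¹ i : Fin k) : ℕ)+1)
              - x i.castSucc ^ (((σ⁻¹ i : Fin k) : ℕ)+1)) / (((σ⁻¹ i : Fin k) : ℕ)+1) := by
      intro σ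
      rw [integral_const_mul, integral_pi_prod _ (fun i => measurableSet_Icc)
        (fun i t => t ^ ((σ⁻¹ i : Fin k) : ℕ))]
      congr 1
      refine Finset.prod_congr rfl fun i _ => ?_
      rw [integral_Icc_pow _ _ (hx (Fin.castSucc_le_succ i))]
    simp_rw [key]
    set M : Matrix (Fin k) (Fin k) ℝ := Matrix.of fun i j =>
      (x i.succ ^ ((j:ℕ)+1) - x i.castSucc ^ ((j:ℕ)+1)) / (((j:ℕ):ℝ)+1) with hM
    have hstep : ∑ σ : Equiv.Perm (Fin k), ((Equiv.Perm.sign σ : ℤ) : ℝ) *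
        ∏ i, (x i.succ ^ (((σ⁻¹ i : Fin k) : ℕ)+1)
          - x i.castSucc ^ (((σ⁻¹ i : Fin k) : ℕ)+1)) / (((σ⁻¹ i : Fin k) : ℕ)+1)
        = Matrix.det M.transpose := by
      rw [Matrix.det_apply,
        ← Equiv.sum_comp (Equiv.inv (Equiv.Perm (Fin k)))
          (fun σ => Equiv.Perm.sign σ • ∏ i, M.transpose (σ i) i)]
      refine Finset.sum_congr rfl fun σ _ => ?_
      simp only [Equiv.inv_apply, Equiv.Perm.sign_inv, Units.smul_def, zsmul_eq_mul,
        Matrix.transpose_apply, hM, Matrix.of_apply]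
    rw [hstep, Matrix.det_transpose, hM]
    have hM2 : (Matrix.of fun i j : Fin k =>
        (x i.succ ^ ((j:ℕ)+1) - x i.castSucc ^ ((j:ℕ)+1)) / (((j:ℕ):ℝ)+1))
        = Matrix.of fun i j : Fin k => (((j:ℕ):ℝ)+1)⁻¹ *
            (Matrix.of fun i j : Fin k =>
              (x i.succ ^ ((j:ℕ)+1) - x i.castSucc ^ ((j:ℕ)+1))) i j := by
      ext i j; simp [div_eq_inv_mul]
    rw [hM2, Matrix.det_mul_row, det_pow_diff]
    have hfac : ∏ j : Fin k, ((((j:ℕ):ℝ))+1)⁻¹ = ((Nat.factorial k : ℝ))⁻¹ := by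
      rw [Finset.prod_inv_distrib]
      congr 1
      rw [Fin.prod_univ_eq_prod_range (fun j => ((j:ℝ)+1)) k]
      rw [← Finset.prod_range_add_one_eq_factorial k]
      push_cast
      rfl
    rw [hfac]
    ring
  · intro σ _
    apply Integrable.const_mul
    apply (ContinuousOn.integrableOn_compact ?_ ?_)
    · exact (isCompact_univ_pi fun i => isCompact_Icc)
    · exact Continuous.continuousOn (by continuity)

instance : IsEmpty (StrictPairs 0) := ⟨fun p => p.1.1.elim0⟩

theorem gt_volume : ∀ (m : ℕ) (x : Fin m → ℝ), Monotone x →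
    Measure.pi (fun _ : StrictPairs m => (volume : Measure ℝ)) (GTset m x)
      = ENNReal.ofReal ((∏ i, ∏ j ∈ Finset.Ioi i, (x j - x i))
          / ∏ r ∈ Finset.range m, (Nat.factorial r : ℝ)) := by
  intro m
  induction m with
  | zero =>
    intro x _
    have h1 : GTset 0 x = Set.univ := by
      ext ω
      simp only [GTset, Set.mem_setOf_eq, Set.mem_univ, iff_true]
      exact ⟨fun i => i.elim0, fun i => i.elim0⟩
    rw [h1, Measure.pi_univ]
    simp
  | succ k ih =>
    intro x hx
    set E := pairEquiv k with hE
    set Φ : ((Fin k → ℝ) × (StrictPairs k → ℝ)) → (StrictPairs (k+1) → ℝ) :=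
      fun yz => (MeasurableEquiv.piCongrLeft (fun _ : StrictPairs (k+1) => ℝ) E)
        ((MeasurableEquiv.sumPiEquivProdPi (fun _ : Fin k ⊕ StrictPairs k => ℝ)).symm yz)
      with hΦ
    have mp : MeasurePreserving Φ
        ((Measure.pi fun _ : Fin k => (volume : Measure ℝ)).prod
          (Measure.pi fun _ : StrictPairs k => (volume : Measure ℝ)))
        (Measure.pi fun _ : StrictPairs (k+1) => (volume : Measure ℝ)) :=
      (measurePreserving_piCongrLeft (fun _ => (volume : Measure ℝ)) E).comp
        (measurePreserving_sumPiEquivProdPi_symm (fun _ => (volume : Measure ℝ)))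
    have hmeas := measurableSet_GTset (k+1) x
    rw [← mp.measure_preimage hmeas.nullMeasurableSet,
      Measure.prod_apply (mp.measurable hmeas)]
    have hΦ1 : ∀ (y : Fin k → ℝ) (z : StrictPairs k → ℝ) (i : Fin k),
        Φ (y, z) (E (Sum.inl i)) = y i := by
      intro y z i
      simp only [hΦ, MeasurableEquiv.coe_piCongrLeft, MeasurableEquiv.coe_sumPiEquivProdPi_symm]
      exact Equiv.piCongrLeft_sumInl (fun _ => ℝ) E y z i
    have hΦ2 : ∀ (y : Fin k → ℝ) (z : StrictPairs k → ℝ) (q : StrictPairs k),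
        Φ (y, z) (E (Sum.inr q)) = z q := by
      intro y z q
      simp only [hΦ, MeasurableEquiv.coe_piCongrLeft, MeasurableEquiv.coe_sumPiEquivProdPi_symm]
      exact Equiv.piCongrLeft_sumInr (fun _ => ℝ) E y z q
    set box : Set (Fin k → ℝ) :=
      Set.univ.pi fun i : Fin k => Set.Icc (x i.castSucc) (x i.succ) with hbox
    have hboxmeas : MeasurableSet box := MeasurableSet.univ_pi fun i => measurableSet_Icc
    have ymono : ∀ y : Fin k → ℝ, y ∈ box → Monotone y := by
      intro y hy
      have aux : ∀ (d : ℕ) (a b : Fin k), (b : ℕ) = (a : ℕ) + d → y a ≤ y b := by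
        intro d
        induction d with
        | zero => intro a b hab; rw [Fin.ext (by omega : (a:ℕ) = (b:ℕ))]
        | succ d ihd =>
          intro a b hab
          have hbk := b.2
          set b' : Fin k := ⟨(a : ℕ) + d, by omega⟩ with hb'
          refine le_trans (ihd a b' (by simp [hb'])) ?_
          have h1 : y b' ≤ x b'.succ := (hy b' (Set.mem_univ _)).2
          have h2 : x b.castSucc ≤ y b := (hy b (Set.mem_univ _)).1
          have h3 : x b'.succ = x b.castSucc :=
            congrArg x (Fin.ext (by simp [hb']; omega))
          linarith
      intro a b hab
      exact aux ((b : ℕ) - (a : ℕ)) a b (by have : (a:ℕ) ≤ b := hab; omega)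
    have hslice : ∀ y : Fin k → ℝ,
        (Measure.pi fun _ : StrictPairs k => (volume : Measure ℝ))
          (Prod.mk y ⁻¹' (Φ ⁻¹' GTset (k+1) x))
        = Set.indicator box
            (fun y => ENNReal.ofReal ((∏ i, ∏ j ∈ Finset.Ioi i, (y j - y i))
              / ∏ r ∈ Finset.range k, (Nat.factorial r : ℝ))) y := by
      intro y
      have hkey : ∀ z : StrictPairs k → ℝ, (y, z) ∈ Φ ⁻¹' GTset (k+1) x ↔
          ((∀ i : Fin k, x i.castSucc ≤ y i ∧ y i ≤ x i.succ) ∧ z ∈ GTset k y) :=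
        fun z => mem_GTset_succ_iff x y z (Φ (y, z)) (hΦ1 y z) (hΦ2 y z)
      by_cases hy : y ∈ box
      · rw [Set.indicator_of_mem hy]
        have hyb : ∀ i : Fin k, x i.castSucc ≤ y i ∧ y i ≤ x i.succ := fun i =>
          hy i (Set.mem_univ _)
        have hset : Prod.mk y ⁻¹' (Φ ⁻¹' GTset (k+1) x) = GTset k y := by
          ext z
          simp only [Set.mem_preimage]
          constructor
          · intro h
            exact ((hkey z).mp h).2
          · intro h
            exact (hkey z).mpr ⟨hyb, h⟩
        rw [hset]
        exact ih y (ymono y hy)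
      · rw [Set.indicator_of_notMem hy]
        have hset : Prod.mk y ⁻¹' (Φ ⁻¹' GTset (k+1) x) = ∅ := by
          ext z
          simp only [Set.mem_preimage, Set.mem_empty_iff_false, iff_false]
          intro hmem
          exact hy fun i _ => Set.mem_Icc.mpr (((hkey z).mp hmem).1 i)
        rw [hset, measure_empty]
    rw [lintegral_congr hslice, lintegral_indicator hboxmeas]
    -- convert to a Bochner integral
    have hsf : (0:ℝ) < ∏ r ∈ Finset.range k, (Nat.factorial r : ℝ) :=
      Finset.prod_pos fun r _ => Nat.cast_pos.mpr (Nat.factorial_pos r)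
    have hcont : Continuous (fun y : Fin k → ℝ =>
        (∏ i, ∏ j ∈ Finset.Ioi i, (y j - y i)) / ∏ r ∈ Finset.range k, (Nat.factorial r : ℝ)) :=
      Continuous.div_const (continuous_finset_prod _ fun i _ =>
        continuous_finset_prod _ fun j _ => (continuous_apply j).sub (continuous_apply i)) _
    have hint : Integrable (fun y : Fin k → ℝ =>
        (∏ i, ∏ j ∈ Finset.Ioi i, (y j - y i)) / ∏ r ∈ Finset.range k, (Nat.factorial r : ℝ))
        ((Measure.pi fun _ : Fin k => (volume : Measure ℝ)).restrict box) := by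
      rw [← volume_pi]
      exact hcont.continuousOn.integrableOn_compact
        (isCompact_univ_pi fun i => isCompact_Icc)
    have hnn : 0 ≤ᵐ[(Measure.pi fun _ : Fin k => (volume : Measure ℝ)).restrict box]
        (fun y : Fin k → ℝ =>
          (∏ i, ∏ j ∈ Finset.Ioi i, (y j - y i)) / ∏ r ∈ Finset.range k, (Nat.factorial r : ℝ)) := by
      refine ae_restrict_of_forall_mem hboxmeas ?_
      intro y hy
      apply div_nonneg _ (le_of_lt hsf)
      refine Finset.prod_nonneg fun i _ => Finset.prod_nonneg fun j hj => ?_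
      have : i ≤ j := le_of_lt (Finset.mem_Ioi.mp hj)
      have := ymono y hy this
      linarith
    rw [show ∫⁻ y in box, ENNReal.ofReal ((∏ i, ∏ j ∈ Finset.Ioi i, (y j - y i))
          / ∏ r ∈ Finset.range k, (Nat.factorial r : ℝ))
          ∂(Measure.pi fun _ : Fin k => (volume : Measure ℝ))
        = ENNReal.ofReal (∫ y in box, ((∏ i, ∏ j ∈ Finset.Ioi i, (y j - y i))
          / ∏ r ∈ Finset.range k, (Nat.factorial r : ℝ))
          ∂(Measure.pi fun _ : Fin k => (volume : Measure ℝ)))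
      from (ofReal_integral_eq_lintegral_ofReal hint hnn).symm]
    congr 1
    rw [integral_div]
    rw [show ∫ y in box, (∏ i, ∏ j ∈ Finset.Ioi i, (y j - y i))
          ∂(Measure.pi fun _ : Fin k => (volume : Measure ℝ))
        = (∏ i, ∏ j ∈ Finset.Ioi i, (x j - x i)) / (Nat.factorial k : ℝ) by
      rw [← volume_pi]
      exact integral_box k x hx]
    rw [Finset.prod_range_succ, div_div, mul_comm]

/-- Let `x₁ < x₂ < ⋯ < xₙ`, let `X_{i,i} = x_i`, and for `i < j` let `X_{i,j}` be
independent uniform random variables on `[x_i, x_j]`.  The probability that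
`X_{i,j} ≤ X_{i+1,j}` and `X_{i,j} ≤ X_{i,j+1}` for all valid indices equals
`1/(1!·2!⋯(n−1)!)`. -/
theorem prob_monotone_array (n : ℕ) (x : Fin n → ℝ) (hx : StrictMono x) :
    (Measure.pi fun p : StrictPairs n => uniformOnIcc (x p.1.1) (x p.1.2))
      {ω : StrictPairs n → ℝ |
        (∀ (i j : Fin n) (h : (i : ℕ) + 1 ≤ (j : ℕ)),
          arrayVal x ω i j ≤ arrayVal x ω ⟨(i : ℕ) + 1, lt_of_le_of_lt h j.2⟩ j) ∧
        (∀ (i j : Fin n) (hij : (i : ℕ) ≤ (j : ℕ)) (h : (j : ℕ) + 1 < n),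
          arrayVal x ω i j ≤ arrayVal x ω i ⟨(j : ℕ) + 1, h⟩)} =
      ENNReal.ofReal (1 / ∏ k ∈ Finset.range n, (Nat.factorial k : ℝ)) := by
  have hlen : ∀ p : StrictPairs n, 0 < x p.1.2 - x p.1.1 := fun p => sub_pos.mpr (hx p.2)
  have hset : {ω : StrictPairs n → ℝ |
      (∀ (i j : Fin n) (h : (i : ℕ) + 1 ≤ (j : ℕ)),
        arrayVal x ω i j ≤ arrayVal x ω ⟨(i : ℕ) + 1, lt_of_le_of_lt h j.2⟩ j) ∧
      (∀ (i j : Fin n) (hij : (i : ℕ) ≤ (j : ℕ)) (h : (j : ℕ) + 1 < n),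
        arrayVal x ω i j ≤ arrayVal x ω i ⟨(j : ℕ) + 1, h⟩)} = GTset n x := rfl
  rw [hset]
  haveI inst : ∀ p : StrictPairs n, IsFiniteMeasure (uniformOnIcc (x p.1.1) (x p.1.2)) := by
    intro p
    constructor
    rw [uniformOnIcc, Measure.smul_apply, Measure.restrict_apply MeasurableSet.univ,
      Set.univ_inter, Real.volume_Icc, smul_eq_mul]
    exact ENNReal.mul_lt_top (ENNReal.inv_lt_top.mpr (ENNReal.ofReal_pos.mpr (hlen p)))
      ENNReal.ofReal_lt_top
  have hpi1 : Measure.pi (fun p : StrictPairs n => uniformOnIcc (x p.1.1) (x p.1.2))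
      = (∏ p : StrictPairs n, (ENNReal.ofReal (x p.1.2 - x p.1.1))⁻¹) •
        Measure.pi (fun p : StrictPairs n =>
          volume.restrict (Set.Icc (x p.1.1) (x p.1.2))) := by
    refine Measure.pi_eq fun s hs => ?_
    rw [Measure.smul_apply, Measure.pi_pi, smul_eq_mul, ← Finset.prod_mul_distrib]
    refine Finset.prod_congr rfl fun p _ => ?_
    rw [uniformOnIcc, Measure.smul_apply, smul_eq_mul, Measure.restrict_apply (hs p)]
  have hpi2 : Measure.pi (fun p : StrictPairs n =>
        volume.restrict (Set.Icc (x p.1.1) (x p.1.2)))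
      = (Measure.pi fun _ : StrictPairs n => (volume : Measure ℝ)).restrict
          (Set.univ.pi fun p : StrictPairs n => Set.Icc (x p.1.1) (x p.1.2)) := by
    refine Measure.pi_eq fun s hs => ?_
    rw [Measure.restrict_apply (MeasurableSet.univ_pi hs), ← Set.pi_inter_distrib,
      Measure.pi_pi]
    exact Finset.prod_congr rfl fun p _ => (Measure.restrict_apply (hs p)).symm
  have hsub : GTset n x ⊆
      Set.univ.pi fun p : StrictPairs n => Set.Icc (x p.1.1) (x p.1.2) :=
    fun ω hω p _ => GTset_subset_box x hω p
  rw [hpi1, hpi2, Measure.smul_apply, Measure.restrict_apply (measurableSet_GTset n x),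
    Set.inter_eq_self_of_subset_left hsub, gt_volume n x hx.monotone, smul_eq_mul]
  have hΔ : (∏ i, ∏ j ∈ Finset.Ioi i, (x j - x i))
      = ∏ p : StrictPairs n, (x p.1.2 - x p.1.1) :=
    (prod_strictPairs n fun i j => x j - x i).symm
  rw [hΔ, div_eq_mul_inv, ENNReal.ofReal_mul (Finset.prod_nonneg fun p _ => (hlen p).le),
    ENNReal.ofReal_prod_of_nonneg (fun p _ => (hlen p).le), ← mul_assoc,
    ← Finset.prod_mul_distrib]
  have hone : ∏ p : StrictPairs n,
      ((ENNReal.ofReal (x p.1.2 - x p.1.1))⁻¹ * ENNReal.ofReal (x p.1.2 - x p.1.1)) = 1 := by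
    refine Finset.prod_eq_one fun p _ => ?_
    exact ENNReal.inv_mul_cancel (ne_of_gt (ENNReal.ofReal_pos.mpr (hlen p)))
      ENNReal.ofReal_ne_top
  rw [hone, one_mul, one_div]
end
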